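/- arXiv:2311.10204 — 7 statements merged into one kernel-verified Lean document; each statement's English description precedes it below -/
import Mathlib

section
/- Let G=(V,E) be a directed graph with node coloring c:V→{1,…,C}, let B:=⌈log₂ C⌉, and for a color γ∈{1,…,C} and 1≤i≤B let bin(γ,i)∈{0,1} denote the i-th bit of the B-bit binary representation of γ. Define the directed graph G'=(V',E') with V':=V×{1,…,B}, edges ((u,B),(v,1))∈E' for every (u,v)∈E, and path edges ((v,i),(v,i+1))∈E' for every v∈V and 1≤i<B; define the node coloring c':V'→{1,2} by c'((v,i)):=bin(c(v),i)+1. Then for all s,t∈V, every ℓ≥1 and all colors c₁,…,c_ℓ∈{1,…,C}: there is a walk of length ℓ from s to t in G with node color sequence c₁,…,c_ℓ if and only if there is a walk of length ℓ·B from (s,B) to (t,B) in G' with node color sequence c'₁,…,c'_{ℓB}, where c'_{(j−1)B+i}:=bin(c_j,i)+1 for all 1≤j≤ℓ and 1≤i≤B. -/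
/-!
Each vertex `v` of `G` becomes a directed path `(v,1) → ⋯ → (v,B)` that spells out the `B` bits
of `c v`, and an edge `u → v` of `G` becomes the edge `(u,B) → (v,1)`. A walk of `G'` between
path ends therefore traverses whole paths, one per step of a walk in `G`, and reading the bits
along each path recovers the color, because a color in `{1, …, C} ⊆ {1, …, 2^B}` is determined
by its residue mod `2^B`, i.e. by its `B` lowest bits.
-/

/-- `NodeColoredWalk E c s t cs` : there is a walk `s = v₀, v₁, …, v_ℓ = t` in the
directed graph with edge relation `E` whose node color sequence
`c v₁, c v₂, …, c v_ℓ` equals `cs`. -/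
inductive NodeColoredWalk {V σ : Type*} (E : V → V → Prop) (c : V → σ) :
    V → V → List σ → Prop
  | nil (v : V) : NodeColoredWalk E c v v []
  | cons {u v w : V} {a : σ} {cs : List σ} (he : E u v) (hc : c v = a)
      (hw : NodeColoredWalk E c v w cs) : NodeColoredWalk E c u w (a :: cs)

namespace NodeColoredWalk

variable {V σ : Type*} {E : V → V → Prop} {c : V → σ}

theorem nil_iff {s t : V} : NodeColoredWalk E c s t [] ↔ s = t := by
  constructor
  · rintro ⟨⟩
    rfl
  · rintro rfl
    exact .nil s

theorem cons_iff {s t : V} {a : σ} {cs : List σ} :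
    NodeColoredWalk E c s t (a :: cs) ↔ ∃ v, E s v ∧ c v = a ∧ NodeColoredWalk E c v t cs := by
  constructor
  · rintro ⟨⟩
    exact ⟨_, ‹_›, ‹_›, ‹_›⟩
  · rintro ⟨v, he, hc, hw⟩
    exact .cons he hc hw

theorem append {u v w : V} {l₁ l₂ : List σ} (h₁ : NodeColoredWalk E c u v l₁)
    (h₂ : NodeColoredWalk E c v w l₂) : NodeColoredWalk E c u w (l₁ ++ l₂) := by
  induction h₁ with
  | nil => exact h₂
  | cons he hc _ ih => exact .cons he hc (ih h₂)

end NodeColoredWalk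

section PathBlowup

variable {V σ τ : Type*} (E : V → V → Prop) (B : ℕ) (f : σ → ℕ → τ) (c : V → σ)

def pathBlowup (p q : V × ℕ) : Prop :=
  (p.2 = B ∧ q.2 = 1 ∧ E p.1 q.1) ∨ (p.1 = q.1 ∧ q.2 = p.2 + 1 ∧ 1 ≤ p.2 ∧ p.2 < B)

def pathBlowupColoring (p : V × ℕ) : τ :=
  f (c p.1) (p.2 - 1)

variable {E B f c}

theorem nodeColoredWalk_pathBlowup_fiber {v : V} :
    ∀ {i k : ℕ}, 1 ≤ i → i + k = B →
      NodeColoredWalk (pathBlowup E B) (pathBlowupColoring f c) (v, i) (v, B)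
        ((List.range' i k).map (f (c v)))
  | i, 0, _, hB => by
    subst hB
    exact .nil _
  | i, k + 1, hi, hB =>
    .cons (v := (v, i + 1)) (Or.inr ⟨rfl, rfl, hi, by omega⟩) (by simp [pathBlowupColoring])
      (nodeColoredWalk_pathBlowup_fiber (by omega) (by omega))

theorem nodeColoredWalk_pathBlowup_fiber_append_inv {v t : V} {L : List τ} :
    ∀ {w : List τ} {i : ℕ}, 1 ≤ i → i + w.length = B →
      NodeColoredWalk (pathBlowup E B) (pathBlowupColoring f c) (v, i) (t, B) (w ++ L) →
      w = (List.range' i w.length).map (f (c v)) ∧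
        NodeColoredWalk (pathBlowup E B) (pathBlowupColoring f c) (v, B) (t, B) L
  | [], i, _, hB, hw => by
    subst hB
    exact ⟨rfl, hw⟩
  | a :: w, i, hi, hB, hw => by
    obtain ⟨⟨u, j⟩, hedge, hcol, hw'⟩ := NodeColoredWalk.cons_iff.mp hw
    obtain ⟨hiB, -⟩ | ⟨rfl, rfl, -⟩ := hedge
    · simp only [List.length_cons] at hiB hB
      omega
    obtain ⟨hword, hL⟩ :=
      nodeColoredWalk_pathBlowup_fiber_append_inv (w := w) (by omega)
        (by rw [List.length_cons] at hB; omega) hw'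
    refine ⟨?_, hL⟩
    simp only [pathBlowupColoring, Nat.add_sub_cancel] at hcol
    simp [List.range'_succ, ← hcol, ← hword]

theorem nodeColoredWalk_iff_pathBlowup (hB : 1 ≤ B) {S : Set σ}
    (hinj : Set.InjOn (fun γ => (List.range B).map (f γ)) S) (hc : ∀ v, c v ∈ S) :
    ∀ {s t : V} {cs : List σ}, (∀ γ ∈ cs, γ ∈ S) →
      (NodeColoredWalk E c s t cs ↔
        NodeColoredWalk (pathBlowup E B) (pathBlowupColoring f c) (s, B) (t, B)
          (cs.flatMap fun γ => (List.range B).map (f γ)))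
  | s, t, [], _ => by simp [NodeColoredWalk.nil_iff]
  | s, t, γ :: cs, hcs => by
    have ih := fun {s} => nodeColoredWalk_iff_pathBlowup hB hinj hc (s := s) (t := t)
      fun γ' h => hcs γ' (List.mem_cons_of_mem γ h)
    have hword : ∀ δ, (List.range B).map (f δ) = f δ 0 :: (List.range' 1 (B - 1)).map (f δ) := by
      intro δ
      obtain ⟨n, rfl⟩ := Nat.exists_eq_add_of_le' hB
      simp [List.range_eq_range', List.range'_succ]
    rw [List.flatMap_cons, hword, List.cons_append, NodeColoredWalk.cons_iff,
      NodeColoredWalk.cons_iff]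
    constructor
    · rintro ⟨v, he, rfl, hw⟩
      refine ⟨(v, 1), Or.inl ⟨rfl, rfl, he⟩, rfl, ?_⟩
      exact (nodeColoredWalk_pathBlowup_fiber le_rfl (by omega)).append (ih.mp hw)
    · rintro ⟨⟨v, j⟩, ⟨-, rfl, he⟩ | ⟨-, -, -, hlt⟩, hcol, hw⟩
      · obtain ⟨hbits, hw'⟩ :=
          nodeColoredWalk_pathBlowup_fiber_append_inv le_rfl
            (by rw [List.length_map, List.length_range']; omega) hw
        have hcv : c v = γ := hinj (hc v) (hcs γ List.mem_cons_self) <| by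
          simp only [pathBlowupColoring, Nat.sub_self] at hcol
          rw [List.length_map, List.length_range'] at hbits
          simp only [hword, hcol, hbits]
        exact ⟨v, he, hcv, ih.mpr hw'⟩
      · exact absurd hlt (lt_irrefl B)

end PathBlowup

theorem binaryWord_injOn (B : ℕ) :
    Set.InjOn (fun γ => (List.range B).map fun i => (γ.testBit i).toNat + 1)
      (Set.Icc 1 (2 ^ B)) := by
  rintro x ⟨hx₁, hx₂⟩ y ⟨hy₁, hy₂⟩ hxy
  have hbits : ∀ i < B, x.testBit i = y.testBit i := by
    intro i hi
    have := congrArg (fun l => l[i]?) hxy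
    simp only [List.getElem?_map, List.getElem?_range hi, Option.map_some, Option.some.injEq,
      Nat.add_right_cancel_iff] at this
    revert this
    cases x.testBit i <;> cases y.testBit i <;> simp
  have hmod : x ≡ y [MOD 2 ^ B] := Nat.eq_of_testBit_eq fun i => by
    by_cases hi : i < B <;> simp [Nat.testBit_mod_two_pow, hi, hbits]
  exact hmod.eq_of_abs_lt (abs_sub_lt_iff.mpr ⟨by omega, by omega⟩)

theorem binary_color_reduction_general {V : Type*} (E : V → V → Prop) (C : ℕ) (hC : 2 ≤ C)
    (c : V → ℕ) (hc : ∀ v, 1 ≤ c v ∧ c v ≤ C)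
    (s t : V) (cs : List ℕ) (hcs : ∀ γ ∈ cs, 1 ≤ γ ∧ γ ≤ C) :
    NodeColoredWalk E c s t cs ↔
      NodeColoredWalk
        (fun p q : V × ℕ =>
          (p.2 = Nat.clog 2 C ∧ q.2 = 1 ∧ E p.1 q.1) ∨
          (p.1 = q.1 ∧ q.2 = p.2 + 1 ∧ 1 ≤ p.2 ∧ p.2 < Nat.clog 2 C))
        (fun p : V × ℕ => (Nat.testBit (c p.1) (p.2 - 1)).toNat + 1)
        (s, Nat.clog 2 C) (t, Nat.clog 2 C)
        (cs.flatMap fun γ =>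
          (List.range (Nat.clog 2 C)).map fun i => (Nat.testBit γ i).toNat + 1) := by
  have hB : 1 ≤ Nat.clog 2 C := Nat.clog_pos one_lt_two hC
  have hCB : Set.Icc 1 C ⊆ Set.Icc 1 (2 ^ Nat.clog 2 C) :=
    Set.Icc_subset_Icc_right (Nat.le_pow_clog one_lt_two C)
  exact nodeColoredWalk_iff_pathBlowup (f := fun γ i => (γ.testBit i).toNat + 1) hB
    ((binaryWord_injOn _).mono hCB) hc hcs

/-- Let `G = (V, E)` be a directed graph node-colored by
`c : V → {1, …, C}`, let `B := ⌈log₂ C⌉` (`Nat.clog 2 C`), and let `bin γ i` be the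
`i`-th bit of the `B`-bit binary representation of `γ` (`(γ.testBit (i-1)).toNat`,
bit `1` being the least significant). Form the graph `G'` on `V × {1, …, B}`
(modeled inside `V × ℕ`) with edges `((u,B), (v,1))` for `(u,v) ∈ E` and path edges
`((v,i), (v,i+1))` for `1 ≤ i < B`, node-colored by `c' (v,i) := bin (c v) i + 1`.
Then there is a walk of length `ℓ` from `s` to `t` in `G` with node color sequence
`c₁, …, c_ℓ` iff there is a walk of length `ℓ·B` from `(s,B)` to `(t,B)` in `G'`
with node color sequence `c'_{(j-1)B+i} := bin c_j i + 1`. -/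
theorem binary_color_reduction {V : Type*} (E : V → V → Prop) (C : ℕ) (hC : 2 ≤ C)
    (c : V → ℕ) (hc : ∀ v, 1 ≤ c v ∧ c v ≤ C)
    (s t : V) (cs : List ℕ) (hcs : ∀ γ ∈ cs, 1 ≤ γ ∧ γ ≤ C) (hne : cs ≠ []) :
    NodeColoredWalk E c s t cs ↔
      NodeColoredWalk
        (fun p q : V × ℕ =>
          (p.2 = Nat.clog 2 C ∧ q.2 = 1 ∧ E p.1 q.1) ∨
          (p.1 = q.1 ∧ q.2 = p.2 + 1 ∧ 1 ≤ p.2 ∧ p.2 < Nat.clog 2 C))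
        (fun p : V × ℕ => (Nat.testBit (c p.1) (p.2 - 1)).toNat + 1)
        (s, Nat.clog 2 C) (t, Nat.clog 2 C)
        (cs.flatMap fun γ =>
          (List.range (Nat.clog 2 C)).map fun i => (Nat.testBit γ i).toNat + 1) :=
  binary_color_reduction_general E C hC c hc s t cs hcs
end

section
/- In the undirected graph G' with edge coloring c' constructed from a directed graph G=(V,E) with node coloring c:V→{1,2} (see context, with path length P=4), the following holds for every v∈V and every color c∈{1,2}: there is a walk z=(z₀,z₁,z₂,z₃,z₄,z₅) in G' with z₀=v_in and edge color sequence (2,c,c,1,2) under c' if and only if c=c(v) and z=path(v), where path(v):=(v_in, v^(1), v^(2), v^(3), v^(4), v_out). -/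
/-!
Edges leaving the gadget of a vertex are attached only to its two ends and have colour 1, so the
first edge (colour 2) must be `v_in — v^(1)`, and from there the walk can only move along the
gadget path. Both path edges at `v^(2)` carry the colour `c v`, so the walk can never turn at
`v^(2)` between its last two edges (colours 1 and 2). Ruling out the remaining turns by their
colours leaves only the straight path, whose second edge forces `γ = c v`.
-/

namespace EdgeGadget

variable {V : Type*} {E : V → V → Prop} {E' : V × Fin 6 → V × Fin 6 → Prop}
  {c' : V × Fin 6 → V × Fin 6 → ℕ}

variable (hE' : ∀ p q, E' p q ↔
      ((p.2 = (5 : Fin 6) ∧ q.2 = 0 ∧ E p.1 q.1) ∨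
       (q.2 = (5 : Fin 6) ∧ p.2 = 0 ∧ E q.1 p.1) ∨
       (p.1 = q.1 ∧ ((q.2 : ℕ) = (p.2 : ℕ) + 1 ∨ (p.2 : ℕ) = (q.2 : ℕ) + 1))))
include hE'

theorem adj_succ {v : V} {i j : Fin 6} (h : (j : ℕ) = i + 1) : E' (v, i) (v, j) :=
  (hE' _ _).2 <| Or.inr <| Or.inr ⟨rfl, Or.inl h⟩

theorem adj_comm {p q : V × Fin 6} : E' p q ↔ E' q p := by
  rw [hE', hE']
  tauto

theorem adj_interior {v : V} {i j k : Fin 6} {q : V × Fin 6} (hi₁ : 1 ≤ (i : ℕ))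
    (hi₄ : (i : ℕ) ≤ 4) (hj : (j : ℕ) + 1 = i) (hk : (k : ℕ) = i + 1) (h : E' (v, i) q) :
    q = (v, j) ∨ q = (v, k) := by
  obtain ⟨w, l⟩ := q
  rcases (hE' _ _).1 h with ⟨h5, -, -⟩ | ⟨-, h0, -⟩ | ⟨rfl, hl⟩
  · simp only at h5; subst h5; simp at hi₄
  · simp only at h0; subst h0; simp at hi₁
  · simp only [Prod.mk.injEq, true_and, Fin.ext_iff] at hl ⊢
    omega

theorem adj_one {v : V} {q : V × Fin 6} (h : E' (v, 1) q) : q = (v, 0) ∨ q = (v, 2) :=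
  adj_interior hE' (by decide) (by decide) rfl rfl h

theorem adj_two {v : V} {q : V × Fin 6} (h : E' (v, 2) q) : q = (v, 1) ∨ q = (v, 3) :=
  adj_interior hE' (by decide) (by decide) rfl rfl h

theorem adj_three {v : V} {q : V × Fin 6} (h : E' (v, 3) q) : q = (v, 2) ∨ q = (v, 4) :=
  adj_interior hE' (by decide) (by decide) rfl rfl h

theorem adj_four {v : V} {q : V × Fin 6} (h : E' (v, 4) q) : q = (v, 3) ∨ q = (v, 5) :=
  adj_interior hE' (by decide) (by decide) rfl rfl h

variable (hsymm : ∀ p q, c' p q = c' q p)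
include hsymm

theorem adj_zero (hcross : ∀ u v, E u v → c' (u, 5) (v, 0) = 1) {v : V} {q : V × Fin 6}
    (h : E' (v, 0) q) : q = (v, 1) ∨ c' (v, 0) q = 1 := by
  obtain ⟨w, l⟩ := q
  rcases (hE' _ _).1 h with ⟨h5, -, -⟩ | ⟨rfl, -, hE⟩ | ⟨rfl, hl | hl⟩
  · simp at h5
  · exact Or.inr ((hsymm _ _).trans (hcross w v hE))
  · exact Or.inl (by simp only at hl; simp [Fin.ext_iff, hl])
  · simp at hl

theorem color_of_adj_two {c : V → ℕ} (hp₁ : ∀ v, c' (v, 1) (v, 2) = c v)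
    (hp₂ : ∀ v, c' (v, 2) (v, 3) = c v) {v : V} {q : V × Fin 6} (h : E' (v, 2) q) :
    c' (v, 2) q = c v := by
  rcases adj_two hE' h with rfl | rfl
  · rw [hsymm, hp₁]
  · exact hp₂ v

theorem color_eq_of_adj_two {c : V → ℕ} (hp₁ : ∀ v, c' (v, 1) (v, 2) = c v)
    (hp₂ : ∀ v, c' (v, 2) (v, 3) = c v) {v : V} {p q : V × Fin 6} (hp : E' p (v, 2))
    (hq : E' (v, 2) q) : c' p (v, 2) = c' (v, 2) q := by
  rw [hsymm, color_of_adj_two hE' hsymm hp₁ hp₂ ((adj_comm hE').1 hp),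
    color_of_adj_two hE' hsymm hp₁ hp₂ hq]

end EdgeGadget

open EdgeGadget in
theorem edge_gadget_claim_general {V : Type*} (E : V → V → Prop)
    (c : V → ℕ)
    (E' : V × Fin 6 → V × Fin 6 → Prop)
    (hE' : ∀ p q, E' p q ↔
      ((p.2 = (5 : Fin 6) ∧ q.2 = 0 ∧ E p.1 q.1) ∨
       (q.2 = (5 : Fin 6) ∧ p.2 = 0 ∧ E q.1 p.1) ∨
       (p.1 = q.1 ∧ ((q.2 : ℕ) = (p.2 : ℕ) + 1 ∨ (p.2 : ℕ) = (q.2 : ℕ) + 1))))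
    (c' : V × Fin 6 → V × Fin 6 → ℕ)
    (hsymm : ∀ p q, c' p q = c' q p)
    (hcross : ∀ u v, E u v → c' (u, 5) (v, 0) = 1)
    (hp0 : ∀ v, c' (v, 0) (v, 1) = 2)
    (hp1 : ∀ v, c' (v, 1) (v, 2) = c v)
    (hp2 : ∀ v, c' (v, 2) (v, 3) = c v)
    (hp3 : ∀ v, c' (v, 3) (v, 4) = 1)
    (hp4 : ∀ v, c' (v, 4) (v, 5) = 2)
    (v : V) (γ : ℕ)
    (z₀ z₁ z₂ z₃ z₄ z₅ : V × Fin 6) :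
    (z₀ = (v, 0) ∧
     E' z₀ z₁ ∧ c' z₀ z₁ = 2 ∧
     E' z₁ z₂ ∧ c' z₁ z₂ = γ ∧
     E' z₂ z₃ ∧ c' z₂ z₃ = γ ∧
     E' z₃ z₄ ∧ c' z₃ z₄ = 1 ∧
     E' z₄ z₅ ∧ c' z₄ z₅ = 2) ↔
      (γ = c v ∧ z₀ = (v, 0) ∧ z₁ = (v, 1) ∧ z₂ = (v, 2) ∧ z₃ = (v, 3) ∧
       z₄ = (v, 4) ∧ z₅ = (v, 5)) := by
  constructor
  · rintro ⟨rfl, e01, c01, e12, c12, e23, c23, e34, c34, e45, c45⟩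
    obtain rfl : z₁ = (v, 1) := (adj_zero hE' hsymm hcross e01).resolve_right (by omega)
    have z₄_ne_two : z₄ ≠ (v, 2) := by
      rintro rfl
      have := color_eq_of_adj_two hE' hsymm hp1 hp2 e34 e45
      omega
    have z₃_ne_one : z₃ ≠ (v, 1) := by
      rintro rfl
      rcases adj_one hE' e34 with rfl | rfl
      · rw [hsymm, hp0] at c34
        omega
      · exact z₄_ne_two rfl
    rcases adj_one hE' e12 with rfl | rfl
    · rw [hsymm, hp0] at c12
      have := (adj_zero hE' hsymm hcross e23).resolve_left z₃_ne_one
      omega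
    obtain rfl : z₃ = (v, 3) := (adj_two hE' e23).resolve_left z₃_ne_one
    obtain rfl : z₄ = (v, 4) := (adj_three hE' e34).resolve_left z₄_ne_two
    rcases adj_four hE' e45 with rfl | rfl
    · rw [hsymm, hp3] at c45
      omega
    · exact ⟨(hp1 v ▸ c12).symm, rfl, rfl, rfl, rfl, rfl, rfl⟩
  · rintro ⟨rfl, rfl, rfl, rfl, rfl, rfl, rfl⟩
    exact ⟨rfl, adj_succ hE' rfl, hp0 v, adj_succ hE' rfl, hp1 v, adj_succ hE' rfl, hp2 v,
      adj_succ hE' rfl, hp3 v, adj_succ hE' rfl, hp4 v⟩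

/-- Let `G = (V, E)` be a directed graph with node coloring
`c : V → {1,2}`. The undirected gadget graph `G'` has, for each `v ∈ V`, the six
vertices `v_in, v^(1), v^(2), v^(3), v^(4), v_out` (modeled as `(v, 0), …, (v, 5)`
in `V × Fin 6`), the path edges `{v_in, v^(1)}, …, {v^(4), v_out}`, and for each
`(u, v) ∈ E` the cross edge `{u_out, v_in}`. The (symmetric) edge coloring `c'` gives
cross edges color `1` and the path edges of `v` the colors `(2, c v, c v, 1, 2)`.
Then for every `v ∈ V` and `γ ∈ {1,2}`: a sequence `z₀, …, z₅` is a walk in `G'`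
with `z₀ = v_in` and edge color sequence `(2, γ, γ, 1, 2)` iff `γ = c v` and
`(z₀, …, z₅) = (v_in, v^(1), v^(2), v^(3), v^(4), v_out)`. -/
theorem edge_gadget_claim {V : Type*} (E : V → V → Prop)
    (c : V → ℕ) (hc : ∀ v, c v = 1 ∨ c v = 2)
    (E' : V × Fin 6 → V × Fin 6 → Prop)
    (hE' : ∀ p q, E' p q ↔
      ((p.2 = (5 : Fin 6) ∧ q.2 = 0 ∧ E p.1 q.1) ∨
       (q.2 = (5 : Fin 6) ∧ p.2 = 0 ∧ E q.1 p.1) ∨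
       (p.1 = q.1 ∧ ((q.2 : ℕ) = (p.2 : ℕ) + 1 ∨ (p.2 : ℕ) = (q.2 : ℕ) + 1))))
    (c' : V × Fin 6 → V × Fin 6 → ℕ)
    (hsymm : ∀ p q, c' p q = c' q p)
    (hcross : ∀ u v, E u v → c' (u, 5) (v, 0) = 1)
    (hp0 : ∀ v, c' (v, 0) (v, 1) = 2)
    (hp1 : ∀ v, c' (v, 1) (v, 2) = c v)
    (hp2 : ∀ v, c' (v, 2) (v, 3) = c v)
    (hp3 : ∀ v, c' (v, 3) (v, 4) = 1)
    (hp4 : ∀ v, c' (v, 4) (v, 5) = 2)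
    (v : V) (γ : ℕ) (hγ : γ = 1 ∨ γ = 2)
    (z₀ z₁ z₂ z₃ z₄ z₅ : V × Fin 6) :
    (z₀ = (v, 0) ∧
     E' z₀ z₁ ∧ c' z₀ z₁ = 2 ∧
     E' z₁ z₂ ∧ c' z₁ z₂ = γ ∧
     E' z₂ z₃ ∧ c' z₂ z₃ = γ ∧
     E' z₃ z₄ ∧ c' z₃ z₄ = 1 ∧
     E' z₄ z₅ ∧ c' z₄ z₅ = 2) ↔
      (γ = c v ∧ z₀ = (v, 0) ∧ z₁ = (v, 1) ∧ z₂ = (v, 2) ∧ z₃ = (v, 3) ∧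
       z₄ = (v, 4) ∧ z₅ = (v, 5)) :=
  edge_gadget_claim_general E c E' hE' c' hsymm hcross hp0 hp1 hp2 hp3 hp4 v γ z₀ z₁ z₂ z₃ z₄ z₅
end

section
/- Let G=(V,E) be a directed graph with node coloring c:V→{1,2} and let G'=(V',E') with edge coloring c' be the undirected graph constructed from G as in the context. For c∈{1,2} write col(c):=(2,c,c,1,2). Then for all s,t∈V, every ℓ≥1 and all colors c₁,…,c_ℓ∈{1,2}: there is a walk of length ℓ from s to t in G with node color sequence c₁,…,c_ℓ if and only if there is a walk of length 6ℓ from s_out to t_out in G' with edge color sequence 1, col(c₁), 1, col(c₂), …, 1, col(c_ℓ). -/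
/-- `EdgeColoredWalk E c s t cs` : there is a walk `s = v₀, v₁, …, v_ℓ = t` in the
graph with edge relation `E` whose edge color sequence `c v₀ v₁, …, c v_{ℓ-1} v_ℓ`
equals `cs`. -/
inductive EdgeColoredWalk {V σ : Type*} (E : V → V → Prop) (c : V → V → σ) :
    V → V → List σ → Prop
  | nil (v : V) : EdgeColoredWalk E c v v []
  | cons {u v w : V} {a : σ} {cs : List σ} (he : E u v) (hc : c u v = a)
      (hw : EdgeColoredWalk E c v w cs) : EdgeColoredWalk E c u w (a :: cs)

namespace EdgeColoredWalk

variable {W τ : Type*} {E' : W → W → Prop} {c' : W → W → τ}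

theorem nil_iff {p q : W} : EdgeColoredWalk E' c' p q [] ↔ p = q :=
  ⟨by rintro ⟨⟩; rfl, by rintro rfl; exact .nil p⟩

theorem cons_iff {p q : W} {a : τ} {l : List τ} :
    EdgeColoredWalk E' c' p q (a :: l) ↔ ∃ r, E' p r ∧ c' p r = a ∧ EdgeColoredWalk E' c' r q l :=
  ⟨by rintro ⟨⟩; exact ⟨_, ‹_›, ‹_›, ‹_›⟩, fun ⟨_, he, hc, hw⟩ => .cons he hc hw⟩

theorem append_iff {p q : W} {l₁ l₂ : List τ} :
    EdgeColoredWalk E' c' p q (l₁ ++ l₂) ↔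
      ∃ r, EdgeColoredWalk E' c' p r l₁ ∧ EdgeColoredWalk E' c' r q l₂ := by
  induction l₁ generalizing p with
  | nil => simp [nil_iff]
  | cons a l₁ ih =>
    simp only [List.cons_append, cons_iff, ih]
    constructor
    · rintro ⟨r, he, hc, r', hw₁, hw₂⟩
      exact ⟨r', ⟨r, he, hc, hw₁⟩, hw₂⟩
    · rintro ⟨r', ⟨r, he, hc, hw₁⟩, hw₂⟩
      exact ⟨r, he, hc, r', hw₁, hw₂⟩

end EdgeColoredWalk

theorem nodeColoredWalk_iff_edgeColoredWalk_flatMap {V W σ τ : Type*} {E : V → V → Prop}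
    {c : V → σ} {E' : W → W → Prop} {c' : W → W → τ} {f : V → W}
    (hf : Function.Injective f) (enc : σ → List τ)
    (hblock : ∀ v q a, EdgeColoredWalk E' c' (f v) q (enc a) ↔ ∃ w, E v w ∧ c w = a ∧ q = f w)
    (s t : V) (cs : List σ) :
    NodeColoredWalk E c s t cs ↔ EdgeColoredWalk E' c' (f s) (f t) (cs.flatMap enc) := by
  induction cs generalizing s with
  | nil => simp [NodeColoredWalk.nil_iff, EdgeColoredWalk.nil_iff, hf.eq_iff]
  | cons a cs ih =>
    simp only [NodeColoredWalk.cons_iff, List.flatMap_cons, EdgeColoredWalk.append_iff, hblock]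
    constructor
    · rintro ⟨w, he, hc, hw⟩
      exact ⟨f w, ⟨w, he, hc, rfl⟩, (ih w).1 hw⟩
    · rintro ⟨_, ⟨w, he, hc, rfl⟩, hw⟩
      exact ⟨w, he, hc, (ih w).2 hw⟩

/-- The gadget graph `G'` of the node-colored digraph `(E, c)`: the vertex `(v, i)` is `v_in`
for `i = 0`, `v^(i)` for `1 ≤ i ≤ 4` and `v_out` for `i = 5`. -/
structure IsGadgetGraph {V : Type*} (E : V → V → Prop) (c : V → ℕ)
    (E' : V × Fin 6 → V × Fin 6 → Prop) (c' : V × Fin 6 → V × Fin 6 → ℕ) : Prop where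
  adj_iff : ∀ p q, E' p q ↔
    ((p.2 = (5 : Fin 6) ∧ q.2 = 0 ∧ E p.1 q.1) ∨
     (q.2 = (5 : Fin 6) ∧ p.2 = 0 ∧ E q.1 p.1) ∨
     (p.1 = q.1 ∧ ((q.2 : ℕ) = (p.2 : ℕ) + 1 ∨ (p.2 : ℕ) = (q.2 : ℕ) + 1)))
  color_comm : ∀ p q, c' p q = c' q p
  color_cross : ∀ u v, E u v → c' (u, 5) (v, 0) = 1
  color_path0 : ∀ v, c' (v, 0) (v, 1) = 2
  color_path1 : ∀ v, c' (v, 1) (v, 2) = c v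
  color_path2 : ∀ v, c' (v, 2) (v, 3) = c v
  color_path3 : ∀ v, c' (v, 3) (v, 4) = 1
  color_path4 : ∀ v, c' (v, 4) (v, 5) = 2

namespace IsGadgetGraph

variable {V : Type*} {E : V → V → Prop} {c : V → ℕ} {E' : V × Fin 6 → V × Fin 6 → Prop}
  {c' : V × Fin 6 → V × Fin 6 → ℕ} {v w : V} {q : V × Fin 6}

theorem adj_mk_iff (hG : IsGadgetGraph E c E' c') {u : V} {i j : Fin 6} :
    E' (v, i) (u, j) ↔ (i = 5 ∧ j = 0 ∧ E v u) ∨ (j = 5 ∧ i = 0 ∧ E u v) ∨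
      (v = u ∧ ((j : ℕ) = i + 1 ∨ (i : ℕ) = j + 1)) :=
  hG.adj_iff _ _

theorem adj_out (hG : IsGadgetGraph E c E' c') {u : V} {j : Fin 6} (h : E' (v, 5) (u, j)) :
    (j = 0 ∧ E v u) ∨ (u = v ∧ j = 4) := by
  rcases hG.adj_mk_iff.1 h with ⟨-, hj, he⟩ | ⟨-, h0, -⟩ | ⟨rfl, hj⟩
  · exact .inl ⟨hj, he⟩
  · exact absurd h0 (by decide)
  · exact .inr ⟨rfl, by omega⟩

theorem adj_in (hG : IsGadgetGraph E c E' c') {u : V} {j : Fin 6} (h : E' (v, 0) (u, j)) :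
    (j = 5 ∧ E u v) ∨ (u = v ∧ j = 1) := by
  rcases hG.adj_mk_iff.1 h with ⟨h5, -⟩ | ⟨hj, -, he⟩ | ⟨rfl, hj⟩
  · exact absurd h5 (by decide)
  · exact .inl ⟨hj, he⟩
  · exact .inr ⟨rfl, by omega⟩

theorem adj_path (hG : IsGadgetGraph E c E' c') {u : V} {i j : Fin 6} (h : E' (v, i) (u, j))
    (h0 : i ≠ 0) (h5 : i ≠ 5) : u = v ∧ ((j : ℕ) + 1 = i ∨ (j : ℕ) = i + 1) := by
  rcases hG.adj_mk_iff.1 h with ⟨hi, -⟩ | ⟨-, hi, -⟩ | ⟨rfl, hj⟩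
  · exact absurd hi h5
  · exact absurd hi h0
  · exact ⟨rfl, by omega⟩

theorem not_walk_two_of_color_eq_one (hG : IsGadgetGraph E c E' c') (hw : c w = 1) :
    ¬EdgeColoredWalk E' c' (w, 2) q [2] := by
  intro h
  obtain ⟨⟨u, j⟩, hadj, hcol, -⟩ := EdgeColoredWalk.cons_iff.1 h
  obtain ⟨rfl, hj⟩ := hG.adj_path hadj (by decide) (by decide)
  obtain rfl | rfl : j = 1 ∨ j = 3 := by omega
  · rw [hG.color_comm, hG.color_path1, hw] at hcol
    exact absurd hcol (by decide)
  · rw [hG.color_path2, hw] at hcol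
    exact absurd hcol (by decide)

theorem not_walk_one (hG : IsGadgetGraph E c E' c') : ¬EdgeColoredWalk E' c' (w, 1) q [1, 2] := by
  intro h
  obtain ⟨⟨u, j⟩, hadj, hcol, h⟩ := EdgeColoredWalk.cons_iff.1 h
  obtain ⟨rfl, hj⟩ := hG.adj_path hadj (by decide) (by decide)
  obtain rfl | rfl : j = 0 ∨ j = 2 := by omega
  · rw [hG.color_comm, hG.color_path0] at hcol
    exact absurd hcol (by decide)
  · rw [hG.color_path1] at hcol
    exact hG.not_walk_two_of_color_eq_one hcol h

theorem not_walk_in (hG : IsGadgetGraph E c E' c') :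
    ¬EdgeColoredWalk E' c' (w, 0) q [2, 1, 2] := by
  intro h
  obtain ⟨⟨u, j⟩, hadj, hcol, h⟩ := EdgeColoredWalk.cons_iff.1 h
  rcases hG.adj_in hadj with ⟨rfl, he⟩ | ⟨rfl, rfl⟩
  · rw [hG.color_comm, hG.color_cross _ _ he] at hcol
    exact absurd hcol (by decide)
  · exact hG.not_walk_one h

theorem eq_out_of_walk_three (hG : IsGadgetGraph E c E' c')
    (h : EdgeColoredWalk E' c' (w, 3) q [1, 2]) : q = (w, 5) := by
  obtain ⟨⟨u, j⟩, hadj, hcol, h⟩ := EdgeColoredWalk.cons_iff.1 h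
  obtain ⟨rfl, hj⟩ := hG.adj_path hadj (by decide) (by decide)
  obtain rfl | rfl : j = 2 ∨ j = 4 := by omega
  · rw [hG.color_comm, hG.color_path2] at hcol
    exact absurd h (hG.not_walk_two_of_color_eq_one hcol)
  · obtain ⟨⟨u', j'⟩, hadj', hcol', h⟩ := EdgeColoredWalk.cons_iff.1 h
    obtain ⟨rfl, hj'⟩ := hG.adj_path hadj' (by decide) (by decide)
    obtain rfl | rfl : j' = 3 ∨ j' = 5 := by omega
    · rw [hG.color_comm, hG.color_path3] at hcol'
      exact absurd hcol' (by decide)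
    · exact (EdgeColoredWalk.nil_iff.1 h).symm

theorem eq_out_of_walk_two (hG : IsGadgetGraph E c E' c')
    (h : EdgeColoredWalk E' c' (w, 2) q [c w, 1, 2]) : q = (w, 5) := by
  obtain ⟨⟨u, j⟩, hadj, -, h⟩ := EdgeColoredWalk.cons_iff.1 h
  obtain ⟨rfl, hj⟩ := hG.adj_path hadj (by decide) (by decide)
  obtain rfl | rfl : j = 1 ∨ j = 3 := by omega
  · exact absurd h hG.not_walk_one
  · exact hG.eq_out_of_walk_three h

theorem eq_out_of_walk_one (hG : IsGadgetGraph E c E' c') {γ : ℕ}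
    (h : EdgeColoredWalk E' c' (w, 1) q [γ, γ, 1, 2]) : c w = γ ∧ q = (w, 5) := by
  obtain ⟨⟨u, j⟩, hadj, hcol, h⟩ := EdgeColoredWalk.cons_iff.1 h
  obtain ⟨rfl, hj⟩ := hG.adj_path hadj (by decide) (by decide)
  obtain rfl | rfl : j = 0 ∨ j = 2 := by omega
  · rw [hG.color_comm, hG.color_path0] at hcol
    subst hcol
    exact absurd h hG.not_walk_in
  · rw [hG.color_path1] at hcol
    subst hcol
    exact ⟨rfl, hG.eq_out_of_walk_two h⟩

theorem eq_out_of_walk_in (hG : IsGadgetGraph E c E' c') {γ : ℕ}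
    (h : EdgeColoredWalk E' c' (w, 0) q [2, γ, γ, 1, 2]) : c w = γ ∧ q = (w, 5) := by
  obtain ⟨⟨u, j⟩, hadj, hcol, h⟩ := EdgeColoredWalk.cons_iff.1 h
  rcases hG.adj_in hadj with ⟨rfl, he⟩ | ⟨rfl, rfl⟩
  · rw [hG.color_comm, hG.color_cross _ _ he] at hcol
    exact absurd hcol (by decide)
  · exact hG.eq_out_of_walk_one h

theorem walk_block_iff (hG : IsGadgetGraph E c E' c') {γ : ℕ} :
    EdgeColoredWalk E' c' (v, 5) q [1, 2, γ, γ, 1, 2] ↔ ∃ w, E v w ∧ c w = γ ∧ q = (w, 5) := by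
  constructor
  · intro h
    obtain ⟨⟨w, j⟩, hadj, hcol, h⟩ := EdgeColoredWalk.cons_iff.1 h
    rcases hG.adj_out hadj with ⟨rfl, he⟩ | ⟨rfl, rfl⟩
    · exact ⟨w, he, hG.eq_out_of_walk_in h⟩
    · rw [hG.color_comm, hG.color_path4] at hcol
      exact absurd hcol (by decide)
  · rintro ⟨w, he, rfl, rfl⟩
    have path {i j : Fin 6} (hij : (j : ℕ) = i + 1) : E' (w, i) (w, j) :=
      hG.adj_mk_iff.2 (.inr (.inr ⟨rfl, .inl hij⟩))
    exact .cons (hG.adj_mk_iff.2 (.inl ⟨rfl, rfl, he⟩)) (hG.color_cross _ _ he) <|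
      .cons (path rfl) (hG.color_path0 w) <| .cons (path rfl) (hG.color_path1 w) <|
      .cons (path rfl) (hG.color_path2 w) <| .cons (path rfl) (hG.color_path3 w) <|
      .cons (path rfl) (hG.color_path4 w) <| .nil _

end IsGadgetGraph

theorem directed_node2_to_undirected_edge2_general {V : Type*} (E : V → V → Prop)
    (c : V → ℕ)
    (E' : V × Fin 6 → V × Fin 6 → Prop)
    (hE' : ∀ p q, E' p q ↔
      ((p.2 = (5 : Fin 6) ∧ q.2 = 0 ∧ E p.1 q.1) ∨
       (q.2 = (5 : Fin 6) ∧ p.2 = 0 ∧ E q.1 p.1) ∨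
       (p.1 = q.1 ∧ ((q.2 : ℕ) = (p.2 : ℕ) + 1 ∨ (p.2 : ℕ) = (q.2 : ℕ) + 1))))
    (c' : V × Fin 6 → V × Fin 6 → ℕ)
    (hsymm : ∀ p q, c' p q = c' q p)
    (hcross : ∀ u v, E u v → c' (u, 5) (v, 0) = 1)
    (hp0 : ∀ v, c' (v, 0) (v, 1) = 2)
    (hp1 : ∀ v, c' (v, 1) (v, 2) = c v)
    (hp2 : ∀ v, c' (v, 2) (v, 3) = c v)
    (hp3 : ∀ v, c' (v, 3) (v, 4) = 1)
    (hp4 : ∀ v, c' (v, 4) (v, 5) = 2)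
    (s t : V) (cs : List ℕ) :
    NodeColoredWalk E c s t cs ↔
      EdgeColoredWalk E' c' (s, 5) (t, 5)
        (cs.flatMap fun γ => [1, 2, γ, γ, 1, 2]) :=
  have hG : IsGadgetGraph E c E' c' := ⟨hE', hsymm, hcross, hp0, hp1, hp2, hp3, hp4⟩
  nodeColoredWalk_iff_edgeColoredWalk_flatMap (Prod.mk_left_injective 5) _
    (fun _ _ _ => hG.walk_block_iff) s t cs

/-- Let `G = (V, E)` be a directed graph with node coloring
`c : V → {1,2}` and let `G'` with edge coloring `c'` be the undirected gadget graph: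
for each `v ∈ V` the six vertices `v_in = (v,0), v^(1) = (v,1), …, v_out = (v,5)`,
path edges `{v_in, v^(1)}, …, {v^(4), v_out}` colored `(2, c v, c v, 1, 2)`, and
cross edges `{u_out, v_in}` colored `1` for every `(u, v) ∈ E`. Writing
`col γ := (2, γ, γ, 1, 2)`, for all `s, t ∈ V`, `ℓ ≥ 1` and `c₁, …, c_ℓ ∈ {1,2}`:
there is a walk of length `ℓ` from `s` to `t` in `G` with node color sequence
`c₁, …, c_ℓ` iff there is a walk of length `6ℓ` from `s_out` to `t_out` in `G'` with
edge color sequence `1, col c₁, 1, col c₂, …, 1, col c_ℓ`. -/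
theorem directed_node2_to_undirected_edge2 {V : Type*} (E : V → V → Prop)
    (c : V → ℕ) (hc : ∀ v, c v = 1 ∨ c v = 2)
    (E' : V × Fin 6 → V × Fin 6 → Prop)
    (hE' : ∀ p q, E' p q ↔
      ((p.2 = (5 : Fin 6) ∧ q.2 = 0 ∧ E p.1 q.1) ∨
       (q.2 = (5 : Fin 6) ∧ p.2 = 0 ∧ E q.1 p.1) ∨
       (p.1 = q.1 ∧ ((q.2 : ℕ) = (p.2 : ℕ) + 1 ∨ (p.2 : ℕ) = (q.2 : ℕ) + 1))))
    (c' : V × Fin 6 → V × Fin 6 → ℕ)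
    (hsymm : ∀ p q, c' p q = c' q p)
    (hcross : ∀ u v, E u v → c' (u, 5) (v, 0) = 1)
    (hp0 : ∀ v, c' (v, 0) (v, 1) = 2)
    (hp1 : ∀ v, c' (v, 1) (v, 2) = c v)
    (hp2 : ∀ v, c' (v, 2) (v, 3) = c v)
    (hp3 : ∀ v, c' (v, 3) (v, 4) = 1)
    (hp4 : ∀ v, c' (v, 4) (v, 5) = 2)
    (s t : V) (cs : List ℕ) (hcs : ∀ γ ∈ cs, γ = 1 ∨ γ = 2) (hne : cs ≠ []) :
    NodeColoredWalk E c s t cs ↔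
      EdgeColoredWalk E' c' (s, 5) (t, 5)
        (cs.flatMap fun γ => [1, 2, γ, γ, 1, 2]) :=
  directed_node2_to_undirected_edge2_general E c E' hE' c' hsymm hcross hp0 hp1 hp2 hp3 hp4 s t cs
end

section
/- In the undirected graph G' with node coloring c' constructed from a directed graph G=(V,E) with node coloring c:V→{1,2} (see context, with path length P=4), the following holds for every v∈V and every color c∈{1,2}: there is a walk z=(z₀,z₁,z₂,z₃,z₄,z₅) in G' with z₀=v_in and node color sequence (2,c,2,2,1) under c' if and only if c=c(v) and z=path(v), where path(v):=(v_in, v^(1), v^(2), v^(3), v^(4), v_out). -/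
/-!
Inside the gadget of a node `a` every interior vertex `(a, i)`, `0 < i < 5`, is adjacent only to
`(a, i - 1)` and `(a, i + 1)`, and the only neighbours of `(a, 0)` of colour `≠ 1` lie on the gadget
path. Hence a walk from `v_in` with colours `(2, γ, 2, 2, 1)` first goes to `v^(1)` and can never
leave the gadget. The colour `1` at the end forces it to reach `v_out` at step five, which leaves
no time to turn back: every detour through `v_in` or back to `v^(1)` gets stuck next to `v^(2)`,
all of whose neighbours have colour `2`.
-/

namespace NodeGadget

variable {V : Type*}

/-- Vertex `(v, i)` stands for `v_in`, `v^(1)`, …, `v^(4)`, `v_out` as `i = 0, …, 5`. -/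
def IsAdj (E : V → V → Prop) (E' : V × Fin 6 → V × Fin 6 → Prop) : Prop :=
  ∀ p q, E' p q ↔
    ((p.2 = (5 : Fin 6) ∧ q.2 = 0 ∧ E p.1 q.1) ∨
     (q.2 = (5 : Fin 6) ∧ p.2 = 0 ∧ E q.1 p.1) ∨
     (p.1 = q.1 ∧ ((q.2 : ℕ) = (p.2 : ℕ) + 1 ∨ (p.2 : ℕ) = (q.2 : ℕ) + 1)))

def IsColoring (c : V → ℕ) (c'' : V × Fin 6 → ℕ) : Prop :=
  ∀ v : V, c'' (v, 0) = 1 ∧ c'' (v, 1) = 2 ∧ c'' (v, 2) = c v ∧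
    c'' (v, 3) = 2 ∧ c'' (v, 4) = 2 ∧ c'' (v, 5) = 1

variable {E : V → V → Prop} {E' : V × Fin 6 → V × Fin 6 → Prop} {c : V → ℕ}
  {c'' : V × Fin 6 → ℕ} {a : V} {w x y : V × Fin 6}

theorem adj_of_val_eq_succ (hE' : IsAdj E E') {i j : Fin 6} (hj : (j : ℕ) = i + 1) :
    E' (a, i) (a, j) :=
  (hE' _ _).2 (Or.inr (Or.inr ⟨rfl, Or.inl hj⟩))

theorem eq_or_eq_of_adj_interior (hE' : IsAdj E E') {i j k : Fin 6} (hj : (j : ℕ) = i + 1)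
    (hk : (i : ℕ) = k + 1) (h : E' (a, i) w) : w = (a, j) ∨ w = (a, k) := by
  obtain ⟨b, l⟩ := w
  have h' := (hE' _ _).1 h
  dsimp only at h'
  rcases h' with ⟨rfl, -, -⟩ | ⟨-, rfl, -⟩ | ⟨rfl, hl | hl⟩
  · omega
  · omega
  · exact Or.inl (Prod.ext rfl (Fin.ext (show (l : ℕ) = j by omega)))
  · exact Or.inr (Prod.ext rfl (Fin.ext (show (l : ℕ) = k by omega)))

theorem eq_of_adj_in (hE' : IsAdj E E') (hc : IsColoring c c'') (h : E' (a, 0) w)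
    (hw : c'' w ≠ 1) : w = (a, 1) := by
  obtain ⟨b, l⟩ := w
  have h' := (hE' _ _).1 h
  dsimp only at h'
  rcases h' with ⟨h5, -, -⟩ | ⟨rfl, -, -⟩ | ⟨rfl, hl | hl⟩
  · exact absurd h5 (by decide)
  · exact absurd (hc b).2.2.2.2.2 hw
  · exact Prod.ext rfl (Fin.ext hl)
  · exact absurd hl (by omega)

theorem color_ne_one_of_adj_two (hE' : IsAdj E E') (hc : IsColoring c c'')
    (h : E' (a, 2) w) : c'' w ≠ 1 := by
  rcases eq_or_eq_of_adj_interior (j := 3) (k := 1) hE' rfl rfl h with rfl | rfl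
  · simp [(hc a).2.2.2.1]
  · simp [(hc a).2.1]

theorem eq_out_of_adj_four (hE' : IsAdj E E') (hc : IsColoring c c'') (h : E' (a, 4) w)
    (hw : c'' w = 1) : w = (a, 5) := by
  rcases eq_or_eq_of_adj_interior (j := 5) (k := 3) hE' rfl rfl h with rfl | rfl
  · rfl
  · simp [(hc a).2.2.2.1] at hw

theorem eq_of_walk_from_three (hE' : IsAdj E E') (hc : IsColoring c c'') (hx : E' (a, 3) x)
    (hxy : E' x y) (hy : c'' y = 1) : x = (a, 4) ∧ y = (a, 5) := by
  rcases eq_or_eq_of_adj_interior (j := 4) (k := 2) hE' rfl rfl hx with rfl | rfl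
  · exact ⟨rfl, eq_out_of_adj_four hE' hc hxy hy⟩
  · exact absurd hy (color_ne_one_of_adj_two hE' hc hxy)

theorem not_walk_from_one (hE' : IsAdj E E') (hc : IsColoring c c'') (hx : E' (a, 1) x)
    (hx2 : c'' x = 2) (hxy : E' x y) : c'' y ≠ 1 := by
  rcases eq_or_eq_of_adj_interior (j := 2) (k := 0) hE' rfl rfl hx with rfl | rfl
  · exact color_ne_one_of_adj_two hE' hc hxy
  · simp [(hc a).1] at hx2

theorem not_walk_from_in (hE' : IsAdj E E') (hc : IsColoring c c'') {z : V × Fin 6}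
    (hx : E' (a, 0) x) (hx2 : c'' x = 2) (hxy : E' x y) (hy2 : c'' y = 2) (hyz : E' y z) :
    c'' z ≠ 1 := by
  obtain rfl := eq_of_adj_in hE' hc hx (by omega)
  exact not_walk_from_one hE' hc hxy hy2 hyz

theorem eq_of_walk_from_two (hE' : IsAdj E E') (hc : IsColoring c c'') {z : V × Fin 6}
    (hx : E' (a, 2) x) (hx2 : c'' x = 2) (hxy : E' x y) (hy2 : c'' y = 2) (hyz : E' y z)
    (hz : c'' z = 1) : x = (a, 3) ∧ y = (a, 4) ∧ z = (a, 5) := by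
  rcases eq_or_eq_of_adj_interior (j := 3) (k := 1) hE' rfl rfl hx with rfl | rfl
  · exact ⟨rfl, eq_of_walk_from_three hE' hc hxy hyz hz⟩
  · exact absurd hz (not_walk_from_one hE' hc hxy hy2 hyz)

end NodeGadget

open NodeGadget

theorem node_gadget_claim_general {V : Type*} (E : V → V → Prop)
    (c : V → ℕ)
    (E' : V × Fin 6 → V × Fin 6 → Prop)
    (hE' : ∀ p q, E' p q ↔
      ((p.2 = (5 : Fin 6) ∧ q.2 = 0 ∧ E p.1 q.1) ∨
       (q.2 = (5 : Fin 6) ∧ p.2 = 0 ∧ E q.1 p.1) ∨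
       (p.1 = q.1 ∧ ((q.2 : ℕ) = (p.2 : ℕ) + 1 ∨ (p.2 : ℕ) = (q.2 : ℕ) + 1))))
    (c'' : V × Fin 6 → ℕ)
    (hc'' : ∀ v : V, c'' (v, 0) = 1 ∧ c'' (v, 1) = 2 ∧ c'' (v, 2) = c v ∧
      c'' (v, 3) = 2 ∧ c'' (v, 4) = 2 ∧ c'' (v, 5) = 1)
    (v : V) (γ : ℕ)
    (z₀ z₁ z₂ z₃ z₄ z₅ : V × Fin 6) :
    (z₀ = (v, 0) ∧
     E' z₀ z₁ ∧ c'' z₁ = 2 ∧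
     E' z₁ z₂ ∧ c'' z₂ = γ ∧
     E' z₂ z₃ ∧ c'' z₃ = 2 ∧
     E' z₃ z₄ ∧ c'' z₄ = 2 ∧
     E' z₄ z₅ ∧ c'' z₅ = 1) ↔
      (γ = c v ∧ z₀ = (v, 0) ∧ z₁ = (v, 1) ∧ z₂ = (v, 2) ∧ z₃ = (v, 3) ∧
       z₄ = (v, 4) ∧ z₅ = (v, 5)) := by
  have hG : IsAdj E E' := hE'
  have hc : IsColoring c c'' := hc''
  constructor
  · rintro ⟨rfl, e₀₁, h₁, e₁₂, h₂, e₂₃, h₃, e₃₄, h₄, e₄₅, h₅⟩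
    obtain rfl := eq_of_adj_in hG hc e₀₁ (by omega)
    rcases eq_or_eq_of_adj_interior (j := 2) (k := 0) hG rfl rfl e₁₂ with rfl | rfl
    · obtain ⟨rfl, rfl, rfl⟩ := eq_of_walk_from_two hG hc e₂₃ h₃ e₃₄ h₄ e₄₅ h₅
      exact ⟨h₂.symm.trans (hc v).2.2.1, rfl, rfl, rfl, rfl, rfl, rfl⟩
    · exact absurd h₅ (not_walk_from_in hG hc e₂₃ h₃ e₃₄ h₄ e₄₅)
  · rintro ⟨rfl, rfl, rfl, rfl, rfl, rfl, rfl⟩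
    obtain ⟨-, h₁, h₂, h₃, h₄, h₅⟩ := hc v
    exact ⟨rfl, adj_of_val_eq_succ hG rfl, h₁, adj_of_val_eq_succ hG rfl, h₂,
      adj_of_val_eq_succ hG rfl, h₃, adj_of_val_eq_succ hG rfl, h₄,
      adj_of_val_eq_succ hG rfl, h₅⟩

/-- Let `G = (V, E)` be a directed graph with node coloring
`c : V → {1,2}`. The undirected gadget graph `G'` has, for each `v ∈ V`, the six
vertices `v_in = (v,0), v^(1) = (v,1), …, v^(4) = (v,4), v_out = (v,5)` in
`V × Fin 6`, the path edges `{v_in, v^(1)}, …, {v^(4), v_out}`, and for each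
`(u, v) ∈ E` the cross edge `{u_out, v_in}`. The node coloring `c''` is given by
`c'' v_in = c'' v_out = 1` and `(c'' v^(1), c'' v^(2), c'' v^(3), c'' v^(4)) =
(2, c v, 2, 2)`. Then for every `v ∈ V` and `γ ∈ {1,2}`: a sequence `z₀, …, z₅` is a
walk in `G'` with `z₀ = v_in` and node color sequence `(2, γ, 2, 2, 1)` iff `γ = c v`
and `(z₀, …, z₅) = (v_in, v^(1), v^(2), v^(3), v^(4), v_out)`. -/
theorem node_gadget_claim {V : Type*} (E : V → V → Prop)
    (c : V → ℕ) (hc : ∀ v, c v = 1 ∨ c v = 2)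
    (E' : V × Fin 6 → V × Fin 6 → Prop)
    (hE' : ∀ p q, E' p q ↔
      ((p.2 = (5 : Fin 6) ∧ q.2 = 0 ∧ E p.1 q.1) ∨
       (q.2 = (5 : Fin 6) ∧ p.2 = 0 ∧ E q.1 p.1) ∨
       (p.1 = q.1 ∧ ((q.2 : ℕ) = (p.2 : ℕ) + 1 ∨ (p.2 : ℕ) = (q.2 : ℕ) + 1))))
    (c'' : V × Fin 6 → ℕ)
    (hc'' : ∀ v : V, c'' (v, 0) = 1 ∧ c'' (v, 1) = 2 ∧ c'' (v, 2) = c v ∧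
      c'' (v, 3) = 2 ∧ c'' (v, 4) = 2 ∧ c'' (v, 5) = 1)
    (v : V) (γ : ℕ) (hγ : γ = 1 ∨ γ = 2)
    (z₀ z₁ z₂ z₃ z₄ z₅ : V × Fin 6) :
    (z₀ = (v, 0) ∧
     E' z₀ z₁ ∧ c'' z₁ = 2 ∧
     E' z₁ z₂ ∧ c'' z₂ = γ ∧
     E' z₂ z₃ ∧ c'' z₃ = 2 ∧
     E' z₃ z₄ ∧ c'' z₄ = 2 ∧
     E' z₄ z₅ ∧ c'' z₅ = 1) ↔
      (γ = c v ∧ z₀ = (v, 0) ∧ z₁ = (v, 1) ∧ z₂ = (v, 2) ∧ z₃ = (v, 3) ∧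
       z₄ = (v, 4) ∧ z₅ = (v, 5)) :=
  node_gadget_claim_general E c E' hE' c'' hc'' v γ z₀ z₁ z₂ z₃ z₄ z₅
end

section
/- Let G=(V,E) be a directed graph with V={1,…,n}, edge coloring c:E→{1,2}, vertices s,t∈V, ℓ≥1 and colors c₁,…,c_ℓ∈{1,2}. Over the alphabet {0,1,2}, define the string S := 0^s c₁ 0^n c₂ 0^n c₃ … 0^n c_{ℓ−1} 0^n c_ℓ 0^{n−t} (where 0^k denotes k repetitions of the symbol 0) and the dictionary D := { 0^u c(u,v) 0^{n−v} : (u,v)∈E }. Then S can be partitioned into dictionary words, i.e., S is the concatenation of finitely many strings each belonging to D (equivalently, S lies in the Kleene star of the language D), if and only if there exists a walk of length ℓ from s to t in G whose edge color sequence under c is c₁,…,c_ℓ. -/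
/-!
Write `z` for the blank letter `0` and `S(s; c₁ … c_ℓ)` for `walkString z n s t [c₁, …, c_ℓ]`.
Splitting the `n` blanks after `c₁` as `0^{n-v} 0^v` gives, for every `v ≤ n`,
`S(s; c₁ c₂ … c_ℓ) = (0^s c₁ 0^{n-v}) · S(v; c₂ … c_ℓ)`, and `S(s; c) = 0^s c 0^{n-t}`.
Since no colour is blank, the first dictionary word of a partition is pinned down by the position
and value of its coloured letter, so the words of a partition of `S` correspond one-to-one with the
edges of a walk, consecutive words sharing the vertex `v`.
-/

namespace WordBreak

open List

variable {α : Type*} (z : α) (n : ℕ)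

def edgeWord (u : ℕ) (a : α) (v : ℕ) : List α :=
  replicate u z ++ a :: replicate (n - v) z

def walkString (s t : ℕ) (cs : List α) : List α :=
  replicate s z ++ intercalate (replicate n z) (cs.map fun γ => [γ]) ++ replicate (n - t) z

variable {z n}

theorem walkString_singleton (s t : ℕ) (γ : α) :
    walkString z n s t [γ] = edgeWord z n s γ t := by
  simp [walkString, edgeWord]

theorem walkString_cons_cons {v : ℕ} (hv : v ≤ n) (s t : ℕ) (γ γ' : α) (cs : List α) :
    walkString z n s t (γ :: γ' :: cs) =
      edgeWord z n s γ v ++ walkString z n v t (γ' :: cs) := by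
  have hsplit : replicate n z = replicate (n - v) z ++ replicate v z := by
    rw [← replicate_add, Nat.sub_add_cancel hv]
  simp only [walkString, edgeWord, map_cons, intercalate_cons_cons]
  nth_rw 1 [hsplit]
  simp only [append_assoc, cons_append, nil_append]

theorem replicate_append_cons_inj {a b : α} (ha : a ≠ z) (hb : b ≠ z) {u s : ℕ} {X Y : List α}
    (h : replicate u z ++ a :: X = replicate s z ++ b :: Y) : u = s ∧ a = b ∧ X = Y := by
  induction u generalizing s with
  | zero =>
    cases s with
    | zero => simpa using h
    | succ s => exact absurd (cons.inj h).1 ha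
  | succ u ih =>
    cases s with
    | zero => exact absurd (cons.inj h).1.symm hb
    | succ s =>
      obtain ⟨rfl, rfl, rfl⟩ := ih (cons.inj h).2
      exact ⟨rfl, rfl, rfl⟩

theorem edgeWord_append_inj {a b : α} (ha : a ≠ z) (hb : b ≠ z) {u s v w : ℕ} {X Y : List α}
    (h : edgeWord z n u a v ++ X = edgeWord z n s b w ++ Y) :
    u = s ∧ a = b ∧ replicate (n - v) z ++ X = replicate (n - w) z ++ Y := by
  simp only [edgeWord, append_assoc, cons_append] at h
  exact replicate_append_cons_inj ha hb h

variable {E : ℕ → ℕ → Prop} {c : ℕ → ℕ → α} {t : ℕ}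

theorem exists_flatten_eq_walkString_of_walk (hE : ∀ u v, E u v → v ≤ n) {s : ℕ} {γ : α}
    {cs : List α} (hw : EdgeColoredWalk E c s t (γ :: cs)) :
    ∃ ws : List (List α), (∀ w ∈ ws, ∃ u v, E u v ∧ w = edgeWord z n u (c u v) v) ∧
      ws.flatten = walkString z n s t (γ :: cs) := by
  induction cs generalizing s γ with
  | nil =>
    obtain _ | ⟨he, rfl, _ | _⟩ := hw
    exact ⟨[edgeWord z n s (c s t) t], by simpa using ⟨s, t, he, rfl⟩,
      by simp [walkString_singleton]⟩
  | cons γ' cs ih =>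
    obtain _ | @⟨_, v, _, _, _, he, rfl, hw⟩ := hw
    obtain ⟨ws, hws, hflat⟩ := ih hw
    exact ⟨edgeWord z n s (c s v) v :: ws, by simpa using ⟨⟨s, v, he, rfl⟩, hws⟩,
      by rw [flatten_cons, hflat, walkString_cons_cons (hE s v he)]⟩

theorem eq_nil_of_forall_mem_flatten_eq (hc : ∀ u v, E u v → c u v ≠ z) {ws : List (List α)}
    (hws : ∀ w ∈ ws, ∃ u v, E u v ∧ w = edgeWord z n u (c u v) v)
    (hblank : ∀ x ∈ ws.flatten, x = z) : ws = [] := by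
  obtain _ | ⟨w, ws⟩ := ws
  · rfl
  obtain ⟨u, v, he, rfl⟩ := hws _ mem_cons_self
  exact absurd (hblank _ (by simp [edgeWord])) (hc u v he)

theorem walk_of_flatten_eq_walkString (hE : ∀ u v, E u v → v ≤ n)
    (hc : ∀ u v, E u v → c u v ≠ z) (ht : t ≤ n) {ws : List (List α)}
    (hws : ∀ w ∈ ws, ∃ u v, E u v ∧ w = edgeWord z n u (c u v) v) {s : ℕ} {γ : α}
    {cs : List α} (hcs : ∀ a ∈ γ :: cs, a ≠ z)
    (hflat : ws.flatten = walkString z n s t (γ :: cs)) : EdgeColoredWalk E c s t (γ :: cs) := by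
  induction ws generalizing s γ cs with
  | nil => simp [walkString] at hflat
  | cons w ws ih =>
    obtain ⟨u, v, he, rfl⟩ := hws _ mem_cons_self
    replace hws : ∀ w ∈ ws, ∃ u v, E u v ∧ w = edgeWord z n u (c u v) v :=
      fun w hw => hws w (mem_cons_of_mem _ hw)
    cases cs with
    | nil =>
      rw [flatten_cons, walkString_singleton, ← append_nil (edgeWord z n s γ t)] at hflat
      obtain ⟨rfl, hγ, htail⟩ := edgeWord_append_inj (hc u v he) (hcs γ mem_cons_self) hflat
      rw [append_nil] at htail
      obtain rfl : ws = [] := eq_nil_of_forall_mem_flatten_eq hc hws fun x hx =>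
        eq_of_mem_replicate (htail ▸ mem_append_right _ hx)
      obtain rfl : v = t := by
        have hlen := congrArg length htail
        simp only [flatten_nil, append_nil, length_replicate] at hlen
        have hv := hE u v he
        omega
      exact .cons he hγ (.nil v)
    | cons γ' cs =>
      rw [flatten_cons, walkString_cons_cons (hE u v he)] at hflat
      obtain ⟨rfl, hγ, htail⟩ := edgeWord_append_inj (hc u v he) (hcs γ mem_cons_self) hflat
      exact .cons he hγ
        (ih hws (fun a ha => hcs a (mem_cons_of_mem _ ha)) (append_cancel_left htail))

theorem exists_flatten_eq_walkString_iff (hE : ∀ u v, E u v → v ≤ n)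
    (hc : ∀ u v, E u v → c u v ≠ z) (ht : t ≤ n) {s : ℕ} {cs : List α} (hcs : ∀ a ∈ cs, a ≠ z)
    (hne : cs ≠ []) :
    (∃ ws : List (List α), (∀ w ∈ ws, ∃ u v, E u v ∧ w = edgeWord z n u (c u v) v) ∧
      ws.flatten = walkString z n s t cs) ↔ EdgeColoredWalk E c s t cs := by
  obtain ⟨γ, cs, rfl⟩ := exists_cons_of_ne_nil hne
  exact ⟨fun ⟨_, hws, hflat⟩ => walk_of_flatten_eq_walkString hE hc ht hws hcs hflat,
    exists_flatten_eq_walkString_of_walk hE⟩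

end WordBreak

theorem word_break_reduction_general (n : ℕ) (E : ℕ → ℕ → Prop)
    (hE : ∀ u v, E u v → 1 ≤ u ∧ u ≤ n ∧ 1 ≤ v ∧ v ≤ n)
    (c : ℕ → ℕ → Fin 3) (hc : ∀ u v, E u v → c u v = 1 ∨ c u v = 2)
    (s t : ℕ) (ht : 1 ≤ t ∧ t ≤ n)
    (cs : List (Fin 3)) (hcs : ∀ γ ∈ cs, γ = 1 ∨ γ = 2) (hne : cs ≠ []) :
    (∃ ws : List (List (Fin 3)),
      (∀ w ∈ ws, ∃ u v, E u v ∧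
        w = List.replicate u (0 : Fin 3) ++ c u v :: List.replicate (n - v) (0 : Fin 3)) ∧
      ws.flatten = List.replicate s (0 : Fin 3) ++
        List.intercalate (List.replicate n (0 : Fin 3)) (cs.map fun γ => [γ]) ++
        List.replicate (n - t) (0 : Fin 3)) ↔
      EdgeColoredWalk E c s t cs := by
  have ne_zero : ∀ γ : Fin 3, γ = 1 ∨ γ = 2 → γ ≠ 0 := by
    rintro γ (rfl | rfl) <;> decide
  exact WordBreak.exists_flatten_eq_walkString_iff (fun u v he => (hE u v he).2.2.2)
    (fun u v he => ne_zero _ (hc u v he)) ht.2 (fun γ hγ => ne_zero γ (hcs γ hγ)) hne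

/-- Let `G = (V, E)` be a directed graph on `V = {1, …, n}` with edge
coloring `c : E → {1,2}`, `s, t ∈ V`, `ℓ ≥ 1` and `c₁, …, c_ℓ ∈ {1,2}`. Over the
alphabet `{0,1,2}` (modeled by `Fin 3`), define the string
`S := 0^s c₁ 0^n c₂ 0^n … 0^n c_ℓ 0^{n-t}` and the dictionary
`D := {0^u c(u,v) 0^{n-v} : (u,v) ∈ E}`. Then `S` can be partitioned into dictionary
words (i.e., `S` is the concatenation of finitely many strings from `D`; equivalently
`S` lies in the Kleene star of `D`) iff there is a walk of length `ℓ` from `s` to `t`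
in `G` with edge color sequence `c₁, …, c_ℓ`. -/
theorem word_break_reduction (n : ℕ) (E : ℕ → ℕ → Prop)
    (hE : ∀ u v, E u v → 1 ≤ u ∧ u ≤ n ∧ 1 ≤ v ∧ v ≤ n)
    (c : ℕ → ℕ → Fin 3) (hc : ∀ u v, E u v → c u v = 1 ∨ c u v = 2)
    (s t : ℕ) (hs : 1 ≤ s ∧ s ≤ n) (ht : 1 ≤ t ∧ t ≤ n)
    (cs : List (Fin 3)) (hcs : ∀ γ ∈ cs, γ = 1 ∨ γ = 2) (hne : cs ≠ []) :
    (∃ ws : List (List (Fin 3)),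
      (∀ w ∈ ws, ∃ u v, E u v ∧
        w = List.replicate u (0 : Fin 3) ++ c u v :: List.replicate (n - v) (0 : Fin 3)) ∧
      ws.flatten = List.replicate s (0 : Fin 3) ++
        List.intercalate (List.replicate n (0 : Fin 3)) (cs.map fun γ => [γ]) ++
        List.replicate (n - t) (0 : Fin 3)) ↔
      EdgeColoredWalk E c s t cs :=
  word_break_reduction_general n E hE c hc s t ht cs hcs hne
end

section
/- Let A={a₁,…,a_n}⊆{0,1}^d and B={b₁,…,b_ℓ}⊆{0,1}^d. Define the NFA M over Σ={0,1,2} with state set {s,t}∪{q^(i)_k : 1≤i≤n, 0≤k≤d}, initial state s, accepting set {t}, and the following transitions: (q^(i)_{k−1},0,q^(i)_k) for all 1≤i≤n and 1≤k≤d; (q^(i)_{k−1},1,q^(i)_k) whenever a_i[k]=0; (s,2,q^(i)_0) and (q^(i)_d,2,t) for all 1≤i≤n; and the loops (s,0,s),(s,1,s),(s,2,s),(t,0,t),(t,1,t),(t,2,t). Define the string S := 2 b₁ 2 b₂ 2 … 2 b_ℓ 2, where each b_j is interpreted as a string of length d over {0,1}. Then M accepts S if and only if there exist i∈{1,…,n}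 and j∈{1,…,ℓ} such that a_i and b_j are orthogonal, i.e., for every 1≤k≤d we have a_i[k]=0 or b_j[k]=0. -/
/-!
An accepting run of `M` on `S` loops at `s`, enters some chain `q^(i)_0 → … → q^(i)_d` on a
`2`, and can leave the chain only from `q^(i)_d` on a `2`, into the absorbing accepting state
`t`. Every `2` of `S` is followed by a whole block `b_j 2` (or ends `S`), so the chain reads
exactly one block `b_j`, which it can do iff `a_i` and `b_j` are orthogonal.
-/

inductive NFAAccepts {Q σ : Type*} (δ : Q → σ → Q → Prop) (F : Set Q) :
    Q → List σ → Prop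
  | nil {q : Q} (h : q ∈ F) : NFAAccepts δ F q []
  | cons {q q' : Q} {a : σ} {x : List σ} (h : δ q a q')
      (hw : NFAAccepts δ F q' x) : NFAAccepts δ F q (a :: x)

namespace NFAAccepts

variable {Q σ : Type*} {δ : Q → σ → Q → Prop} {F : Set Q} {q : Q}

theorem nil_iff : NFAAccepts δ F q [] ↔ q ∈ F :=
  ⟨fun | .nil h => h, .nil⟩

theorem cons_iff {c : σ} {x : List σ} :
    NFAAccepts δ F q (c :: x) ↔ ∃ q', δ q c q' ∧ NFAAccepts δ F q' x :=
  ⟨fun | .cons h hw => ⟨_, h, hw⟩, fun ⟨_, h, hw⟩ => .cons h hw⟩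

theorem append_iff_of_forall_step_iff_eq {w x : List σ}
    (hw : ∀ c ∈ w, ∀ q', δ q c q' ↔ q' = q) :
    NFAAccepts δ F q (w ++ x) ↔ NFAAccepts δ F q x := by
  induction w with
  | nil => rfl
  | cons c w ih =>
    rw [List.cons_append, cons_iff]
    simp only [hw c List.mem_cons_self, exists_eq_left]
    exact ih fun c' hc' => hw c' (List.mem_cons_of_mem c hc')

theorem of_mem_of_forall_step_self (hq : q ∈ F) (hloop : ∀ c, δ q c q) (x : List σ) :
    NFAAccepts δ F q x := by
  induction x with
  | nil => exact .nil hq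
  | cons c x ih => exact .cons (hloop c) ih

end NFAAccepts

theorem Fin.forall_ge_iff_and_forall_ge_succ {d k : ℕ} (hk : k < d) {P : Fin d → Prop} :
    (∀ m : Fin d, k ≤ m → P m) ↔ P ⟨k, hk⟩ ∧ ∀ m : Fin d, k + 1 ≤ m → P m := by
  refine ⟨fun h => ⟨h _ le_rfl, fun m hm => h m (by omega)⟩, fun ⟨hk', h⟩ m hm => ?_⟩
  rcases hm.eq_or_lt with hkm | hkm
  · exact (Fin.ext hkm : (⟨k, hk⟩ : Fin d) = m) ▸ hk'
  · exact h m hkm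

namespace OVNFA

def Orthogonal {d : ℕ} (u v : Fin d → Bool) : Prop :=
  ∀ k, u k = false ∨ v k = false

def bitSymbol (c : Bool) : Fin 3 := if c then 1 else 0

theorem bitSymbol_ne_two (c : Bool) : bitSymbol c ≠ 2 := by
  cases c <;> decide

theorem bitSymbol_step_iff (c p : Bool) :
    (bitSymbol c = 0 ∨ bitSymbol c = 1 ∧ p = false) ↔ p = false ∨ c = false := by
  cases c <;> cases p <;> decide

def encode {d : ℕ} (v : Fin d → Bool) : List (Fin 3) :=
  List.ofFn fun k => bitSymbol (v k)

def encodeBlocks {d : ℕ} (L : List (Fin d → Bool)) : List (Fin 3) :=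
  (L.map fun v => encode v ++ [2]).flatten

theorem encodeBlocks_cons {d : ℕ} (v : Fin d → Bool) (L : List (Fin d → Bool)) :
    encodeBlocks (v :: L) = encode v ++ 2 :: encodeBlocks L := by
  simp [encodeBlocks]

variable {n d : ℕ} (a : Fin n → Fin d → Bool)

-- The states `s`, `t`, `q^(i)_k` are `inr false`, `inr true`, `inl (i, k)`.
def step : (Fin n × ℕ) ⊕ Bool → Fin 3 → (Fin n × ℕ) ⊕ Bool → Prop :=
  fun p x q =>
    (∃ (i : Fin n) (k : ℕ) (hk : k < d), p = .inl (i, k) ∧ q = .inl (i, k + 1) ∧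
      (x = 0 ∨ (x = 1 ∧ a i ⟨k, hk⟩ = false))) ∨
    (∃ i : Fin n, p = .inr false ∧ x = 2 ∧ q = .inl (i, 0)) ∨
    (∃ i : Fin n, p = .inl (i, d) ∧ x = 2 ∧ q = .inr true) ∨
    (∃ br : Bool, p = .inr br ∧ q = .inr br)

def accepting (n : ℕ) : Set ((Fin n × ℕ) ⊕ Bool) := {p | p = .inr true}

local notation "Accepts" => NFAAccepts (step a) (accepting n)

section step
variable {c : Fin 3} {q : (Fin n × ℕ) ⊕ Bool}

theorem step_start_iff :
    step a (.inr false) c q ↔ q = .inr false ∨ c = 2 ∧ ∃ i, q = .inl (i, 0) := by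
  simp [step, or_comm]

theorem step_final_iff : step a (.inr true) c q ↔ q = .inr true := by
  simp [step]

theorem step_inner_iff {i : Fin n} {k : ℕ} (hk : k < d) :
    step a (.inl (i, k)) c q ↔ q = .inl (i, k + 1) ∧ (c = 0 ∨ c = 1 ∧ a i ⟨k, hk⟩ = false) := by
  simp [step, hk, hk.ne]

theorem step_last_iff {i : Fin n} : step a (.inl (i, d)) c q ↔ c = 2 ∧ q = .inr true := by
  simp [step]

end step

theorem accepts_final (x : List (Fin 3)) : Accepts (.inr true) x :=
  .of_mem_of_forall_step_self (F := accepting n) rfl (fun _ => (step_final_iff a).2 rfl) x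

theorem accepts_inner_iff (i : Fin n) (v : Fin d → Bool) (rest : List (Fin 3)) (k : ℕ)
    (hk : k ≤ d) :
    Accepts (.inl (i, k)) ((encode v).drop k ++ 2 :: rest) ↔
      ∀ m : Fin d, k ≤ m → a i m = false ∨ v m = false := by
  rcases hk.lt_or_eq with hk | rfl
  · rw [List.drop_eq_getElem_cons (by simpa [encode]), List.cons_append, NFAAccepts.cons_iff,
      Fin.forall_ge_iff_and_forall_ge_succ hk, ← accepts_inner_iff i v rest (k + 1) hk]
    simp only [step_inner_iff a hk, and_assoc, exists_eq_left, encode, List.getElem_ofFn,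
      bitSymbol_step_iff]
  · rw [List.drop_of_length_le (by simp [encode]), List.nil_append, NFAAccepts.cons_iff]
    simp [step_last_iff, accepts_final]
termination_by d - k

theorem accepts_block_iff (i : Fin n) (v : Fin d → Bool) (rest : List (Fin 3)) :
    Accepts (.inl (i, 0)) (encode v ++ 2 :: rest) ↔ Orthogonal (a i) v := by
  simpa [Orthogonal] using accepts_inner_iff a i v rest 0 (Nat.zero_le d)

theorem accepts_start_append_encode_iff (v : Fin d → Bool) (x : List (Fin 3)) :
    Accepts (.inr false) (encode v ++ x) ↔ Accepts (.inr false) x := by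
  refine NFAAccepts.append_iff_of_forall_step_iff_eq fun c hc q => ?_
  obtain ⟨k, rfl⟩ := List.mem_ofFn.1 hc
  simp [step_start_iff, bitSymbol_ne_two]

theorem accepts_start_two_cons_iff (x : List (Fin 3)) :
    Accepts (.inr false) (2 :: x) ↔
      Accepts (.inr false) x ∨ ∃ i, Accepts (.inl (i, 0)) x := by
  simp [NFAAccepts.cons_iff, step_start_iff, or_and_right, exists_or]

theorem accepts_start_encodeBlocks_iff (L : List (Fin d → Bool)) :
    Accepts (.inr false) (2 :: encodeBlocks L) ↔ ∃ i, ∃ v ∈ L, Orthogonal (a i) v := by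
  induction L with
  | nil =>
    rw [encodeBlocks, List.map_nil, List.flatten_nil, accepts_start_two_cons_iff]
    simp [NFAAccepts.nil_iff, accepting]
  | cons v L ih =>
    rw [accepts_start_two_cons_iff, encodeBlocks_cons, accepts_start_append_encode_iff, ih]
    simp only [accepts_block_iff, List.mem_cons, or_and_right, exists_or, exists_eq_left]
    exact or_comm

end OVNFA

/-- Let `A = {a₁, …, a_n} ⊆ {0,1}^d` and `B = {b₁, …, b_ℓ} ⊆ {0,1}^d`
(vectors modeled as `Fin d → Bool`, entry `0` being `false`). Define the NFA `M` over
`Σ = {0,1,2}` (= `Fin 3`) with states `{s, t} ∪ {q^{(i)}_k : 1 ≤ i ≤ n, 0 ≤ k ≤ d}`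
(modeled inside `(Fin n × ℕ) ⊕ Bool`, `s = Sum.inr false`, `t = Sum.inr true`,
`q^{(i)}_k = Sum.inl (i, k)`): transitions `(q^{(i)}_{k-1}, 0, q^{(i)}_k)` for all
`i, k`, `(q^{(i)}_{k-1}, 1, q^{(i)}_k)` whenever `a_i[k] = 0`, `(s, 2, q^{(i)}_0)`
and `(q^{(i)}_d, 2, t)` for all `i`, and loops on `s` and `t` for every symbol.
Then `M` accepts the string `S := 2 b₁ 2 b₂ 2 … 2 b_ℓ 2` iff there are `i, j` such
that `a_i` and `b_j` are orthogonal. -/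
theorem ov_to_nfa_acceptance (n d ℓ : ℕ)
    (a : Fin n → Fin d → Bool) (b : Fin ℓ → Fin d → Bool) :
    NFAAccepts
        (fun (p : (Fin n × ℕ) ⊕ Bool) (x : Fin 3) (q : (Fin n × ℕ) ⊕ Bool) =>
          (∃ (i : Fin n) (k : ℕ) (hk : k < d), p = .inl (i, k) ∧ q = .inl (i, k + 1) ∧
            (x = 0 ∨ (x = 1 ∧ a i ⟨k, hk⟩ = false))) ∨
          (∃ i : Fin n, p = .inr false ∧ x = 2 ∧ q = .inl (i, 0)) ∨
          (∃ i : Fin n, p = .inl (i, d) ∧ x = 2 ∧ q = .inr true) ∨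
          (∃ br : Bool, p = .inr br ∧ q = .inr br))
        {p : (Fin n × ℕ) ⊕ Bool | p = .inr true} (.inr false)
        ((2 : Fin 3) ::
          (List.ofFn fun j : Fin ℓ =>
            (List.ofFn fun k : Fin d => if b j k then (1 : Fin 3) else 0) ++
              [(2 : Fin 3)]).flatten) ↔
      ∃ (i : Fin n) (j : Fin ℓ), ∀ k : Fin d, a i k = false ∨ b j k = false := by
  have h := OVNFA.accepts_start_encodeBlocks_iff a (List.ofFn b)
  rw [OVNFA.encodeBlocks, List.map_ofFn] at h
  simp only [List.mem_ofFn, exists_exists_eq_and] at h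
  -- `step a`, `accepting n` and `encode` unfold to the statement's NFA and string
  exact h
end

section
/- Let G be an undirected graph on vertex set V={0,…,n−1} with n≥2, let B:=⌈log₂ n⌉, and for v∈V let ID(v)∈{0,1}^B denote the B-bit binary representation of v. Suppose for each u∈V that N(u) is an NFA over {0,1} with a single start state and a single accepting state whose accepted language is exactly {ID(v) : {u,v}∈E}. For vertices u₁,…,u_k∈V and an integer k'≥1, let CG(u₁,…,u_k) be the serial connection of the sequence of NFAs N(u₁),N(u₂),…,N(u_k) repeated k' times, where the serial connection of a sequence of NFAs is formed by identifying the accepting state of each NFA with the start state of the next, the start state of the first NFA being the start state and the accepting state of the last NFA the unique accepting state. Then for all v₁,…,v_{k'}∈V: CG(u₁,…,u_k) accepts the string ID(v₁)^k ID(v₂)^k … ID(v_{k'})^k (each ID(v_j) repeated k times, concatenated) if and only if {u_i,v_j}∈E for every 1≤i≤k and 1≤j≤k'. -/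
/-- The equivalence relation generated by a relation `r`. -/
inductive IdentGen {α : Type*} (r : α → α → Prop) : α → α → Prop
  | rel {x y : α} : r x y → IdentGen r x y
  | refl (x : α) : IdentGen r x x
  | symm {x y : α} : IdentGen r x y → IdentGen r y x
  | trans {x y z : α} : IdentGen r x y → IdentGen r y z → IdentGen r x z

/-- The vertex of `G` whose NFA is the `j`-th automaton (0-indexed) in the serial
connection of the sequence `N(u 0), …, N(u (k-1))` repeated `k'` times. -/
def stageVertex {n k : ℕ} (hk : 0 < k) (u : Fin k → Fin n) (j : ℕ) : Fin n :=
  u ⟨j % k, Nat.mod_lt j hk⟩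

/-- For the serial connection of `m` automata (whose states are modeled as pairs
`(index of automaton in the sequence, state)`), the identification of the accepting
state of each automaton with the start state of the next one. -/
def identRel {Q : Type*} {n k : ℕ} (hk : 0 < k) (u : Fin k → Fin n)
    (st acc : Fin n → Q) (m : ℕ) : ℕ × Q → ℕ × Q → Prop :=
  fun p q => q.1 = p.1 + 1 ∧ q.1 < m ∧ p.2 = acc (stageVertex hk u p.1) ∧
    q.2 = st (stageVertex hk u q.1)

/-- The transition relation of the serial connection: the quotient by the
identification is modeled by saturating the stage transitions under the generated
equivalence `IdentGen (identRel …)`. -/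
def serialδ {Q : Type*} {n k : ℕ} (hk : 0 < k) (u : Fin k → Fin n)
    (st acc : Fin n → Q) (m : ℕ) (δ : Fin n → Q → Bool → Q → Prop) :
    ℕ × Q → Bool → ℕ × Q → Prop :=
  fun p x q => ∃ (j : ℕ) (q₁ q₂ : Q), j < m ∧
    IdentGen (identRel hk u st acc m) p (j, q₁) ∧
    δ (stageVertex hk u j) q₁ x q₂ ∧
    IdentGen (identRel hk u st acc m) (j, q₂) q

/-- `binID n v` : the `B`-bit binary representation of the vertex `v ∈ {0, …, n-1}`,
where `B := ⌈log₂ n⌉`. -/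
def binID (n : ℕ) (v : Fin n) : List Bool :=
  List.ofFn fun i : Fin (Nat.clog 2 n) => Nat.testBit (v : ℕ) (i : ℕ)

/-!
Every `N(x)` accepts only words of length `B > 0`, so its start and accepting states differ and
each class of the identification is a singleton or a junction `(j, acc) ≡ (j + 1, st)`. Cutting an
accepting run at its visits to junctions shows that a run starting at stage `j` reads at least `B`
letters for each of the remaining stages, crossing a junction backwards only costs more. The
input has exactly `B·k·k'` letters, so the run crosses each junction once, forwards, and reads in
stage `t` a word of length `B` accepted by `N(u (t mod k))`, which must be the block `ID(v ⌊t/k⌋)`.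
-/

theorem IdentGen.eq_or_rel_or_rel {α : Type*} {r : α → α → Prop}
    (hchain : ∀ x y z, r x y → ¬r y z) (hfun : ∀ x y z, r x y → r x z → y = z)
    (hinj : ∀ x y z, r x z → r y z → x = y) {p q : α} (h : IdentGen r p q) :
    p = q ∨ r p q ∨ r q p := by
  induction h with
  | rel h => exact .inr (.inl h)
  | refl => exact .inl rfl
  | symm _ ih =>
    rcases ih with rfl | h | h
    exacts [.inl rfl, .inr (.inr h), .inr (.inl h)]
  | trans _ _ ih₁ ih₂ =>
    rcases ih₁ with rfl | h₁ | h₁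
    · exact ih₂
    · rcases ih₂ with rfl | h₂ | h₂
      exacts [.inr (.inl h₁), (hchain _ _ _ h₁ h₂).elim, .inl (hinj _ _ _ h₁ h₂)]
    · rcases ih₂ with rfl | h₂ | h₂
      exacts [.inr (.inr h₁), .inl (hfun _ _ _ h₁ h₂), (hchain _ _ _ h₂ h₁).elim]

theorem NFAAccepts.append {S σ : Type*} {d : S → σ → S → Prop} {F₁ F₂ : Set S} {q : S}
    {w₁ w₂ : List σ} (h₁ : NFAAccepts d F₁ q w₁) (h₂ : ∀ q' ∈ F₁, NFAAccepts d F₂ q' w₂) :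
    NFAAccepts d F₂ q (w₁ ++ w₂) := by
  induction h₁ with
  | nil h => exact h₂ _ h
  | cons h _ ih => exact .cons h ih

theorem List.length_flatten_map_of_length_eq {α β : Type*} {l : List α} {w : α → List β}
    {B : ℕ} (hw : ∀ t ∈ l, (w t).length = B) : (l.map w).flatten.length = B * l.length := by
  induction l with
  | nil => simp
  | cons a l ih =>
    simp only [List.map_cons, List.flatten_cons, List.length_append, List.length_cons,
      hw a List.mem_cons_self, ih fun t ht => hw t (List.mem_cons_of_mem a ht)]
    ring

theorem List.eq_nil_of_append_eq_of_length_le {α : Type*} {x y z : List α} (h : x ++ y = z)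
    (hz : z.length ≤ y.length) : x = [] := by
  have := congrArg List.length h
  rw [List.length_append] at this
  exact List.length_eq_zero_iff.mp (by omega)

/-! The serial connection of an arbitrary sequence of automata `A j` with start state `s j` and
accepting state `f j`, `j < m`; `identRel` and `serialδ` are the case
`A j = δ (stageVertex hk u j)`. -/
namespace SerialConnection

variable {Q σ : Type*} (A : ℕ → Q → σ → Q → Prop) (s f : ℕ → Q) (m : ℕ)

def glue (p q : ℕ × Q) : Prop :=
  q.1 = p.1 + 1 ∧ q.1 < m ∧ p.2 = f p.1 ∧ q.2 = s q.1

def step (p : ℕ × Q) (a : σ) (q : ℕ × Q) : Prop :=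
  ∃ j q₁ q₂, j < m ∧ IdentGen (glue s f m) p (j, q₁) ∧ A j q₁ a q₂ ∧
    IdentGen (glue s f m) (j, q₂) q

def final : Set (ℕ × Q) :=
  {p | IdentGen (glue s f m) p (m - 1, f (m - 1))}

variable {A s f m}

theorem identGen_glue_cases (hsf : ∀ j < m, s j ≠ f j) {p q : ℕ × Q}
    (h : IdentGen (glue s f m) p q) : p = q ∨ glue s f m p q ∨ glue s f m q p := by
  refine h.eq_or_rel_or_rel ?_ ?_ ?_
  · rintro _ y _ ⟨-, hy, -, hys⟩ ⟨-, -, hyf, -⟩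
    exact hsf y.1 hy (hys.symm.trans hyf)
  · rintro x y z ⟨hy, -, -, hys⟩ ⟨hz, -, -, hzs⟩
    exact Prod.ext (hy.trans hz.symm) (by rw [hys, hzs, hy, hz])
  · rintro x y z ⟨hx, -, hxf, -⟩ ⟨hy, -, hyf, -⟩
    have h₁ : x.1 = y.1 := by omega
    exact Prod.ext h₁ (by rw [hxf, hyf, h₁])

theorem accepts_of_stage {j : ℕ} (hj : j < m) {q r : Q} {x : List σ}
    (h : NFAAccepts (A j) {r} q x) {p : ℕ × Q} (hp : IdentGen (glue s f m) p (j, q)) :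
    NFAAccepts (step A s f m) {p' | IdentGen (glue s f m) p' (j, r)} p x := by
  induction h generalizing p with
  | nil hq => exact .nil ((Set.mem_singleton_iff.mp hq) ▸ hp)
  | cons ha _ ih => exact .cons ⟨j, _, _, hj, hp, ha, .refl _⟩ (ih (.refl _))

theorem accepts_flatten_of_forall {w : ℕ → List σ}
    (hw : ∀ t < m, NFAAccepts (A t) {f t} (s t) (w t)) {j : ℕ} (hj : j < m) {p : ℕ × Q}
    (hp : IdentGen (glue s f m) p (j, s j)) :
    NFAAccepts (step A s f m) (final s f m) p ((List.range' j (m - j)).map w).flatten := by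
  obtain ⟨d, hd⟩ : ∃ d, m - j = d + 1 := ⟨m - j - 1, by omega⟩
  rw [hd]
  induction d generalizing j p with
  | zero =>
    obtain rfl : j = m - 1 := by omega
    simpa [final] using accepts_of_stage hj (hw _ hj) hp
  | succ d ih =>
    rw [List.range'_succ, List.map_cons, List.flatten_cons]
    refine (accepts_of_stage hj (hw j hj) hp).append fun p' hp' => ?_
    exact ih (by omega) (hp'.trans (.rel ⟨rfl, by omega, rfl, rfl⟩)) (by omega)

variable (A s f m) in
/-- A run of the serial connection from state `q` of stage `j` to the accepting state, cut
at every visit of a junction `(j, f j) ≡ (j + 1, s (j + 1))`; the run may cross a junction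
backwards as well as forwards. -/
inductive StageRun : ℕ → Q → List σ → Prop
  | last {j : ℕ} {q : Q} {x : List σ} (hj : j + 1 = m) (h : NFAAccepts (A j) {f j} q x) :
      StageRun j q x
  | next {j : ℕ} {q : Q} {x y : List σ} (hj : j + 1 < m) (h : NFAAccepts (A j) {f j} q x)
      (hy : StageRun (j + 1) (s (j + 1)) y) : StageRun j q (x ++ y)
  | prev {j : ℕ} {q : Q} {x y : List σ} (hj : j + 1 < m)
      (h : NFAAccepts (A (j + 1)) {s (j + 1)} q x) (hy : StageRun j (f j) y) :
      StageRun (j + 1) q (x ++ y)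

theorem StageRun.cons {j : ℕ} {q q' : Q} {a : σ} {x : List σ} (ha : A j q a q')
    (h : StageRun A s f m j q' x) : StageRun A s f m j q (a :: x) := by
  cases h with
  | last hj h => exact .last hj (.cons ha h)
  | next hj h hy => exact .next hj (.cons ha h) hy
  | prev hj h hy => exact .prev hj (.cons ha h) hy

theorem StageRun.of_identGen (hsf : ∀ j < m, s j ≠ f j) {j j' : ℕ} {q q' : Q} {x : List σ}
    (hjq : IdentGen (glue s f m) (j, q) (j', q')) (h : StageRun A s f m j' q' x) :
    StageRun A s f m j q x := by
  rcases identGen_glue_cases hsf hjq with he | ⟨hj', hj, hq, hq'⟩ | ⟨hj', hj, hq', hq⟩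
  · simp only [Prod.mk.injEq] at he
    obtain ⟨rfl, rfl⟩ := he
    exact h
  · dsimp only at hj' hj hq hq'
    subst hj' hq hq'
    exact .next hj (.nil rfl) h
  · dsimp only at hj' hj hq hq'
    subst hj' hq hq'
    exact .prev hj (.nil rfl) h

theorem stageRun_of_accepts (hsf : ∀ j < m, s j ≠ f j) {p : ℕ × Q} {x : List σ}
    (h : NFAAccepts (step A s f m) (final s f m) p x) {j : ℕ} {q : Q} (hj : j < m)
    (hp : IdentGen (glue s f m) p (j, q)) : StageRun A s f m j q x := by
  induction h generalizing j q with
  | nil hfin =>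
    rcases identGen_glue_cases hsf (hp.symm.trans hfin) with he | ⟨-, -, -, hsf'⟩ | ⟨he, -⟩
    · simp only [Prod.mk.injEq] at he
      obtain ⟨rfl, rfl⟩ := he
      exact .last (by omega) (.nil rfl)
    · exact (hsf _ (by omega) hsf'.symm).elim
    · simp only at he
      omega
  | cons hstep _ ih =>
    obtain ⟨j', q₁, q₂, hj', hp₁, ha, hq₂⟩ := hstep
    exact .of_identGen hsf (hp.symm.trans hp₁) ((ih hj' hq₂.symm).cons ha)

theorem StageRun.length_ge {B : ℕ}
    (hlen : ∀ j < m, ∀ x : List σ, NFAAccepts (A j) {f j} (s j) x → x.length = B)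
    {j : ℕ} {q : Q} {x : List σ} (h : StageRun A s f m j q x) :
    (q = s j → B * (m - j) ≤ x.length) ∧ (q = f j → B * (m - (j + 1)) ≤ x.length) := by
  induction h with
  | last hj h =>
    refine ⟨fun hq => ?_, fun _ => by simp [← hj]⟩
    subst hq
    rw [hlen _ (by omega) _ h, show m - _ = 1 by omega, mul_one]
  | @next j _ _ _ hj h _ ih =>
    have hy := ih.1 rfl
    refine ⟨fun hq => ?_, fun _ => by rw [List.length_append]; omega⟩
    subst hq
    have hB : B * (m - j) = B * (m - (j + 1)) + B := by
      rw [show m - j = m - (j + 1) + 1 by omega, mul_add_one]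
    rw [List.length_append, hlen _ (by omega) _ h]
    omega
  | @prev j _ _ _ hj _ _ ih =>
    have hy := ih.2 rfl
    have hmono : B * (m - (j + 1 + 1)) ≤ B * (m - (j + 1)) := Nat.mul_le_mul_left _ (by omega)
    exact ⟨fun _ => by rw [List.length_append]; omega, fun _ => by rw [List.length_append]; omega⟩

theorem StageRun.forall_accepts {B : ℕ} (hB : 0 < B)
    (hlen : ∀ j < m, ∀ x : List σ, NFAAccepts (A j) {f j} (s j) x → x.length = B)
    {w : ℕ → List σ} (hw : ∀ t < m, (w t).length = B)
    {j : ℕ} {q : Q} {x : List σ} (h : StageRun A s f m j q x) :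
    (q = s j → x = ((List.range' j (m - j)).map w).flatten →
      ∀ t, j ≤ t → t < m → NFAAccepts (A t) {f t} (s t) (w t)) ∧
    (q = f j → x = ((List.range' (j + 1) (m - (j + 1))).map w).flatten →
      ∀ t, j < t → t < m → NFAAccepts (A t) {f t} (s t) (w t)) := by
  have hsuf : ∀ i, ((List.range' i (m - i)).map w).flatten.length = B * (m - i) := fun i => by
    rw [List.length_flatten_map_of_length_eq fun t ht => hw t
      (by rw [List.mem_range'_1] at ht; omega), List.length_range']
  induction h with
  | @last j _ _ hj h =>
    refine ⟨fun hq hx t ht ht' => ?_, fun _ _ t ht ht' => by omega⟩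
    subst hq
    obtain rfl : t = j := by omega
    simp only [show m - t = 1 by omega, List.range'_one, List.map_cons, List.map_nil,
      List.flatten_cons, List.flatten_nil, List.append_nil] at hx
    exact hx ▸ h
  | @next j _ _ _ hj h hy ih =>
    refine ⟨fun hq hxy t ht ht' => ?_, fun _ hxy => ?_⟩
    · subst hq
      rw [show m - j = m - (j + 1) + 1 by omega, List.range'_succ, List.map_cons,
        List.flatten_cons] at hxy
      obtain ⟨rfl, hy'⟩ := List.append_inj hxy (by rw [hlen j (by omega) _ h, hw j (by omega)])
      rcases ht.eq_or_lt with rfl | ht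
      · exact h
      · exact ih.1 rfl hy' t ht ht'
    · obtain rfl := List.eq_nil_of_append_eq_of_length_le hxy
        (by rw [hsuf]; exact (hy.length_ge hlen).1 rfl)
      exact ih.1 rfl hxy
  | @prev j _ _ _ hj _ hy ih =>
    have hy_len := (hy.length_ge hlen).2 rfl
    refine ⟨fun _ hxy => ?_, fun _ hxy => ?_⟩
    · obtain rfl := List.eq_nil_of_append_eq_of_length_le hxy (by rw [hsuf]; exact hy_len)
      exact ih.2 rfl hxy
    · have hlt : B * (m - (j + 1 + 1)) < B * (m - (j + 1)) :=
        Nat.mul_lt_mul_of_pos_left (by omega) hB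
      have := congrArg List.length hxy
      rw [List.length_append, hsuf] at this
      omega

theorem accepts_iff {B : ℕ} (hB : 0 < B) (hm : 0 < m)
    (hlen : ∀ j < m, ∀ x : List σ, NFAAccepts (A j) {f j} (s j) x → x.length = B)
    {w : ℕ → List σ} (hw : ∀ t < m, (w t).length = B) :
    NFAAccepts (step A s f m) (final s f m) (0, s 0) ((List.range m).map w).flatten ↔
      ∀ t < m, NFAAccepts (A t) {f t} (s t) (w t) := by
  have hsf : ∀ j < m, s j ≠ f j := fun j hj hsf => by
    simpa [hB.ne] using hlen j hj [] (.nil hsf)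
  rw [List.range_eq_range']
  refine ⟨fun h t ht => ?_, fun h => accepts_flatten_of_forall h hm (.refl _)⟩
  exact ((stageRun_of_accepts hsf h hm (.refl _)).forall_accepts hB hlen hw).1 rfl rfl t
    t.zero_le ht

end SerialConnection

theorem List.flatten_ofFn_flatten_replicate {α : Type*} (k k' : ℕ) (hk' : 0 < k')
    (x : Fin k' → List α) :
    (List.ofFn fun j => (List.replicate k (x j)).flatten).flatten =
      ((List.range (k * k')).map fun t => x ⟨t / k % k', Nat.mod_lt _ hk'⟩).flatten := by
  rw [← List.map_coe_finRange_eq_range, List.map_map, ← List.ofFn_eq_map, List.ofFn_mul',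
    List.flatten_flatten, List.map_ofFn]
  congr 1
  refine List.ofFn_inj.mpr (funext fun j => ?_)
  simp only [Function.comp_apply, ← List.ofFn_const]
  congr 2
  funext i
  have hk : 0 < k := i.pos
  congr 2
  ext
  simp only [Nat.mul_add_div hk, Nat.div_eq_of_lt i.isLt, Nat.add_zero, Nat.mod_eq_of_lt j.isLt]

theorem length_binID (n : ℕ) (v : Fin n) : (binID n v).length = Nat.clog 2 n :=
  List.length_ofFn

theorem binID_injective (n : ℕ) : Function.Injective (binID n) := by
  intro a b h
  have hbits := List.ofFn_inj.mp h
  refine Fin.ext (Nat.eq_of_testBit_eq fun i => ?_)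
  by_cases hi : i < Nat.clog 2 n
  · exact congrFun hbits ⟨i, hi⟩
  · have hle : n ≤ 2 ^ i :=
      (Nat.le_pow_clog one_lt_two n).trans (Nat.pow_le_pow_right two_pos (by omega))
    rw [Nat.testBit_lt_two_pow (a.isLt.trans_le hle), Nat.testBit_lt_two_pow (b.isLt.trans_le hle)]

theorem forall_lt_mul_iff {k k' : ℕ} (hk : 0 < k) (hk' : 0 < k') (P : Fin k → Fin k' → Prop) :
    (∀ t < k * k', P ⟨t % k, Nat.mod_lt t hk⟩ ⟨t / k % k', Nat.mod_lt _ hk'⟩) ↔ ∀ i j, P i j := by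
  refine ⟨fun h i j => ?_, fun h t _ => h _ _⟩
  have hlt : k * j + i < k * k' := by nlinarith [i.isLt, j.isLt]
  convert h _ hlt using 2
  · rw [Nat.mul_add_mod, Nat.mod_eq_of_lt i.isLt]
  · rw [Nat.mul_add_div hk, Nat.div_eq_of_lt i.isLt, Nat.add_zero, Nat.mod_eq_of_lt j.isLt]

theorem clique_gadget_acceptance_general {Q : Type*} (n : ℕ) (hn : 2 ≤ n)
    (E : Fin n → Fin n → Prop)
    (δ : Fin n → Q → Bool → Q → Prop) (st acc : Fin n → Q)
    (hlang : ∀ (u : Fin n) (w : List Bool),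
      NFAAccepts (δ u) {acc u} (st u) w ↔ ∃ v : Fin n, E u v ∧ w = binID n v)
    (k k' : ℕ) (hk : 0 < k) (hk' : 1 ≤ k')
    (u : Fin k → Fin n) (v : Fin k' → Fin n) :
    NFAAccepts (serialδ hk u st acc (k * k') δ)
        {p : ℕ × Q | IdentGen (identRel hk u st acc (k * k')) p
          (k * k' - 1, acc (stageVertex hk u (k * k' - 1)))}
        (0, st (stageVertex hk u 0))
        ((List.ofFn fun j : Fin k' =>
          (List.replicate k (binID n (v j))).flatten).flatten) ↔
      ∀ (i : Fin k) (j : Fin k'), E (u i) (v j) := by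
  have hB : 0 < Nat.clog 2 n := Nat.clog_pos one_lt_two hn
  have haccepts : ∀ x y, NFAAccepts (δ x) {acc x} (st x) (binID n y) ↔ E x y := fun x y =>
    (hlang x _).trans ⟨fun ⟨_, he, hy⟩ => binID_injective n hy ▸ he, fun he => ⟨y, he, rfl⟩⟩
  rw [List.flatten_ofFn_flatten_replicate k k' hk']
  refine (SerialConnection.accepts_iff (A := fun j => δ (stageVertex hk u j))
    (s := fun j => st (stageVertex hk u j)) (f := fun j => acc (stageVertex hk u j)) hB
    (Nat.mul_pos hk hk') (fun j _ x hx => ?_) (fun t _ => length_binID n _)).trans ?_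
  · obtain ⟨y, -, rfl⟩ := (hlang _ x).mp hx
    exact length_binID n y
  · simp only [haccepts, stageVertex]
    exact forall_lt_mul_iff hk hk' fun i j => E (u i) (v j)

/-- Let `G` be an undirected simple graph on `V = {0, …, n-1}`, `n ≥ 2`,
`B := ⌈log₂ n⌉`, and `ID(v)` the `B`-bit binary representation of `v`. Suppose for
each `u ∈ V` that `N(u)` is an NFA over `{0,1}` (with state space `Q`, transitions
`δ u`, single start state `st u` and single accepting state `acc u`) accepting exactly
the language `{ID(v) : {u,v} ∈ E}`. For `u₁, …, u_k ∈ V` (`k ≥ 1`) and `k' ≥ 1`, let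
`CG(u₁, …, u_k)` be the serial connection of `N(u₁), …, N(u_k)` repeated `k'` times,
formed by identifying the accepting state of each NFA in the sequence with the start
state of the next; its start state is the start state of the first NFA, and its unique
accepting state is (the class of) the accepting state of the last NFA. Then for all
`v₁, …, v_{k'} ∈ V`: `CG(u₁, …, u_k)` accepts `ID(v₁)^k ID(v₂)^k ⋯ ID(v_{k'})^k`
iff `{u_i, v_j} ∈ E` for every `1 ≤ i ≤ k` and `1 ≤ j ≤ k'`. -/
theorem clique_gadget_acceptance {Q : Type*} (n : ℕ) (hn : 2 ≤ n)
    (E : Fin n → Fin n → Prop) (hsymm : ∀ u v, E u v → E v u)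
    (δ : Fin n → Q → Bool → Q → Prop) (st acc : Fin n → Q)
    (hlang : ∀ (u : Fin n) (w : List Bool),
      NFAAccepts (δ u) {acc u} (st u) w ↔ ∃ v : Fin n, E u v ∧ w = binID n v)
    (k k' : ℕ) (hk : 0 < k) (hk' : 1 ≤ k')
    (u : Fin k → Fin n) (v : Fin k' → Fin n) :
    NFAAccepts (serialδ hk u st acc (k * k') δ)
        {p : ℕ × Q | IdentGen (identRel hk u st acc (k * k')) p
          (k * k' - 1, acc (stageVertex hk u (k * k' - 1)))}
        (0, st (stageVertex hk u 0))
        ((List.ofFn fun j : Fin k' =>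
          (List.replicate k (binID n (v j))).flatten).flatten) ↔
      ∀ (i : Fin k) (j : Fin k'), E (u i) (v j) :=
  clique_gadget_acceptance_general n hn E δ st acc hlang k k' hk hk' u v
end
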